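/- arXiv:1212.6887 — 5 statements merged into one kernel-verified Lean document; each statement's English description precedes it below -/
import Mathlib

section
/- Let η : ℝ → ℝ be a measurable real-valued function with ∫_ℝ |η(t)|/(1+t²) dt < ∞. If for every z in the upper or lower half-plane ∫_ℝ η(t)/(t−z)² dt = 0, then η is almost everywhere equal to a real constant. -/
open MeasureTheory

/-!
The Poisson integral `u(x, y) = ∫ η(t) y / ((t - x)² + y²) dt` is the imaginary part of a
primitive of `z ↦ ∫ η(t) / (t - z)² dt`, so `∂ₓu(x, y) = Im ∫ η(t) / (t - x - iy)² dt = 0` and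
`u(·, y)` is a constant `c(y)` for each `y ≠ 0`. Pairing with a test function `φ` and using
Fubini, `c(y) ∫ φ = ∫ η(t) (φ * P_y)(t) dt`, and this tends to `π ∫ η φ` as `y → 0⁺`: `φ * P_y`
converges pointwise to `π φ` and is `O(1 / (1 + t²))` uniformly in `y ≤ 1`. Hence
`∫ η φ = L ∫ φ` for every test function, where `L` is read off from one normalized bump,
so `η = L` almost everywhere.
-/

open Real Filter Topology Set

/-- The Poisson kernel of the upper half-plane, without the factor `1 / π`. -/
noncomputable def halfPlanePoissonKernel (y s : ℝ) : ℝ := y / (s ^ 2 + y ^ 2)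

noncomputable def halfPlanePoissonIntegral (η : ℝ → ℝ) (x y : ℝ) : ℝ :=
  ∫ t, η t * halfPlanePoissonKernel y (t - x)

lemma halfPlanePoissonKernel_nonneg {y : ℝ} (hy : 0 ≤ y) (s : ℝ) : 0 ≤ halfPlanePoissonKernel y s :=
  div_nonneg hy (by positivity)

lemma halfPlanePoissonKernel_sub_eq_im (x y t : ℝ) :
    halfPlanePoissonKernel y (t - x) = ((t : ℂ) - ⟨x, y⟩)⁻¹.im := by
  simp only [halfPlanePoissonKernel, Complex.inv_im, Complex.normSq_apply, Complex.sub_re,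
    Complex.sub_im, Complex.ofReal_re, Complex.ofReal_im, zero_sub, neg_neg, mul_neg, neg_mul]
  ring

lemma hasDerivAt_halfPlanePoissonKernel_sub {y : ℝ} (hy : y ≠ 0) (x t : ℝ) :
    HasDerivAt (fun x => halfPlanePoissonKernel y (t - x))
      ((((t : ℂ) - (⟨x, y⟩ : ℂ)) ^ 2)⁻¹).im x := by
  have hne : (t : ℂ) - ⟨x, y⟩ ≠ 0 := fun h => hy (by simpa using congrArg Complex.im h)
  have h : HasDerivAt (fun x : ℝ => (t : ℂ) - ⟨x, y⟩) (-1) x := by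
    simpa [Complex.mk_eq_add_mul_I] using
      ((hasDerivAt_id x).ofReal_comp.add_const (y * Complex.I)).const_sub (t : ℂ)
  simp_rw [halfPlanePoissonKernel_sub_eq_im]
  simpa [Function.comp_def] using Complex.imCLM.hasFDerivAt.comp_hasDerivAt x (h.inv hne)

lemma norm_ofReal_sub_sq (t : ℝ) (z : ℂ) : ‖((t : ℂ) - z) ^ 2‖ = (t - z.re) ^ 2 + z.im ^ 2 := by
  rw [norm_pow, Complex.sq_norm, Complex.normSq_apply]
  simp only [Complex.sub_re, Complex.sub_im, Complex.ofReal_re, Complex.ofReal_im, zero_sub]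
  ring

lemma inv_sub_sq_add_sq_le {R x y : ℝ} (hx : |x| ≤ R) (hy : y ≠ 0) (t : ℝ) :
    ((t - x) ^ 2 + y ^ 2)⁻¹ ≤ ((1 + 2 * R ^ 2) / y ^ 2 + 2) / (1 + t ^ 2) := by
  have hy2 : 0 < y ^ 2 := by positivity
  have hxR : x ^ 2 ≤ R ^ 2 := sq_le_sq' (abs_le.1 hx).1 (abs_le.1 hx).2
  have hK : (1 + 2 * R ^ 2) / y ^ 2 * y ^ 2 = 1 + 2 * R ^ 2 := div_mul_cancel₀ _ hy2.ne'
  have hK0 : 0 ≤ (1 + 2 * R ^ 2) / y ^ 2 := by positivity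
  rw [inv_eq_one_div, div_le_div_iff₀ (by positivity) (by positivity)]
  nlinarith [mul_nonneg hK0 (sq_nonneg (t - x)), sq_nonneg (t + x)]

lemma abs_halfPlanePoissonKernel_sub_le {R x y : ℝ} (hx : |x| ≤ R) (hy : y ≠ 0) (t : ℝ) :
    |halfPlanePoissonKernel y (t - x)| ≤ |y| * ((1 + 2 * R ^ 2) / y ^ 2 + 2) / (1 + t ^ 2) := by
  have hD : 0 < (t - x) ^ 2 + y ^ 2 := by positivity
  rw [halfPlanePoissonKernel, abs_div, abs_of_pos hD, div_eq_mul_inv, mul_div_assoc]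
  exact mul_le_mul_of_nonneg_left (inv_sub_sq_add_sq_le hx hy t) (abs_nonneg y)

lemma norm_inv_ofReal_sub_sq_le {R : ℝ} {z : ℂ} (hz : |z.re| ≤ R) (hz' : z.im ≠ 0) (t : ℝ) :
    ‖(((t : ℂ) - z) ^ 2)⁻¹‖ ≤ ((1 + 2 * R ^ 2) / z.im ^ 2 + 2) / (1 + t ^ 2) := by
  rw [norm_inv, norm_ofReal_sub_sq]
  exact inv_sub_sq_add_sq_le hz hz' t

section

variable {η : ℝ → ℝ}

lemma integrable_mul_halfPlanePoissonKernel_sub (hmeas : Measurable η)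
    (hint : Integrable (fun t => |η t| / (1 + t ^ 2))) {y : ℝ} (hy : y ≠ 0) (x : ℝ) :
    Integrable (fun t => η t * halfPlanePoissonKernel y (t - x)) := by
  refine (hint.const_mul (|y| * ((1 + 2 * |x| ^ 2) / y ^ 2 + 2))).mono'
    (hmeas.mul (by unfold halfPlanePoissonKernel; fun_prop)).aestronglyMeasurable
    (Eventually.of_forall fun t => ?_)
  calc ‖η t * halfPlanePoissonKernel y (t - x)‖
      ≤ |η t| * (|y| * ((1 + 2 * |x| ^ 2) / y ^ 2 + 2) / (1 + t ^ 2)) := by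
        rw [norm_mul, Real.norm_eq_abs, Real.norm_eq_abs]
        exact mul_le_mul_of_nonneg_left (abs_halfPlanePoissonKernel_sub_le le_rfl hy t)
          (abs_nonneg _)
    _ = _ := by ring

lemma integrable_div_ofReal_sub_sq (hmeas : Measurable η)
    (hint : Integrable (fun t => |η t| / (1 + t ^ 2))) {z : ℂ} (hz : z.im ≠ 0) :
    Integrable (fun t : ℝ => (η t : ℂ) / ((t : ℂ) - z) ^ 2) := by
  refine (hint.const_mul ((1 + 2 * |z.re| ^ 2) / z.im ^ 2 + 2)).mono'
    (by fun_prop : Measurable fun t : ℝ => (η t : ℂ) / ((t : ℂ) - z) ^ 2).aestronglyMeasurable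
    (Eventually.of_forall fun t => ?_)
  calc ‖(η t : ℂ) / ((t : ℂ) - z) ^ 2‖
      = |η t| * ‖(((t : ℂ) - z) ^ 2)⁻¹‖ := by
        rw [div_eq_mul_inv, norm_mul, Complex.norm_real, Real.norm_eq_abs]
    _ ≤ |η t| * (((1 + 2 * |z.re| ^ 2) / z.im ^ 2 + 2) / (1 + t ^ 2)) :=
        mul_le_mul_of_nonneg_left (norm_inv_ofReal_sub_sq_le le_rfl hz t) (abs_nonneg _)
    _ = _ := by ring

lemma hasDerivAt_halfPlanePoissonIntegral (hmeas : Measurable η)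
    (hint : Integrable (fun t => |η t| / (1 + t ^ 2))) {y : ℝ} (hy : y ≠ 0) (x₀ : ℝ) :
    HasDerivAt (halfPlanePoissonIntegral η · y)
      (∫ t, (η t : ℂ) / ((t : ℂ) - (⟨x₀, y⟩ : ℂ)) ^ 2).im x₀ := by
  set K := (1 + 2 * (|x₀| + 1) ^ 2) / y ^ 2 + 2
  have hderiv := hasDerivAt_integral_of_dominated_loc_of_deriv_le (μ := volume)
    (F := fun x t => η t * halfPlanePoissonKernel y (t - x))
    (F' := fun x t => η t * ((((t : ℂ) - (⟨x, y⟩ : ℂ)) ^ 2)⁻¹).im)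
    (bound := fun t => K * (|η t| / (1 + t ^ 2))) (Metric.ball_mem_nhds x₀ one_pos)
    (Eventually.of_forall fun x => (integrable_mul_halfPlanePoissonKernel_sub hmeas hint hy x).1)
    (integrable_mul_halfPlanePoissonKernel_sub hmeas hint hy x₀)
    (hmeas.mul (by fun_prop)).aestronglyMeasurable ?_ (hint.const_mul K)
    (Eventually.of_forall fun t x _ => (hasDerivAt_halfPlanePoissonKernel_sub hy x t).const_mul _)
  · have hz : (⟨x₀, y⟩ : ℂ).im ≠ 0 := hy
    have him := integral_im (integrable_div_ofReal_sub_sq hmeas hint hz)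
    simp only [RCLike.im_to_complex] at him
    rw [← him]
    simp only [div_eq_mul_inv, Complex.im_ofReal_mul]
    exact hderiv.2
  · refine Eventually.of_forall fun t x hx => ?_
    have hxR : |x| ≤ |x₀| + 1 := by
      have := abs_sub_abs_le_abs_sub x x₀
      rw [Metric.mem_ball, Real.dist_eq] at hx
      linarith
    calc ‖η t * ((((t : ℂ) - (⟨x, y⟩ : ℂ)) ^ 2)⁻¹).im‖
        ≤ |η t| * (K / (1 + t ^ 2)) := by
          rw [norm_mul, Real.norm_eq_abs, Real.norm_eq_abs]
          exact mul_le_mul_of_nonneg_left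
            ((Complex.abs_im_le_norm _).trans (norm_inv_ofReal_sub_sq_le hxR hy t))
            (abs_nonneg _)
      _ = K * (|η t| / (1 + t ^ 2)) := by ring

lemma halfPlanePoissonIntegral_eq_of_integral_div_sub_sq_eq_zero (hmeas : Measurable η)
    (hint : Integrable (fun t => |η t| / (1 + t ^ 2)))
    (hvanish : ∀ z : ℂ, z.im ≠ 0 → (∫ t : ℝ, (η t : ℂ) / (((t : ℂ) - z) ^ 2)) = 0)
    {y : ℝ} (hy : y ≠ 0) (x : ℝ) :
    halfPlanePoissonIntegral η x y = halfPlanePoissonIntegral η 0 y := by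
  have hderiv x := hasDerivAt_halfPlanePoissonIntegral hmeas hint hy x
  simp_rw [hvanish ⟨_, y⟩ hy, Complex.zero_im] at hderiv
  exact is_const_of_deriv_eq_zero (fun x => (hderiv x).differentiableAt)
    (fun x => (hderiv x).deriv) x 0

lemma integral_mul_halfPlanePoissonKernel_sub (φ : ℝ → ℝ) {y : ℝ} (hy : 0 < y) (t : ℝ) :
    ∫ x, φ x * halfPlanePoissonKernel y (t - x) = ∫ σ, φ (t - y * σ) * (1 + σ ^ 2)⁻¹ := by
  have hscale σ : φ (t - y * σ) * halfPlanePoissonKernel y (y * σ) =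
      y⁻¹ * (φ (t - y * σ) * (1 + σ ^ 2)⁻¹) := by
    rw [halfPlanePoissonKernel]
    field_simp
    ring
  calc ∫ x, φ x * halfPlanePoissonKernel y (t - x)
      = ∫ u, φ (t - u) * halfPlanePoissonKernel y u := by
        simpa using (integral_sub_left_eq_self
          (fun x => φ x * halfPlanePoissonKernel y (t - x)) volume t).symm
    _ = y * ∫ σ, φ (t - y * σ) * halfPlanePoissonKernel y (y * σ) := by
        rw [Measure.integral_comp_mul_left (fun u => φ (t - u) * halfPlanePoissonKernel y u),
          abs_of_pos (inv_pos.2 hy), smul_eq_mul, mul_inv_cancel_left₀ hy.ne']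
    _ = ∫ σ, φ (t - y * σ) * (1 + σ ^ 2)⁻¹ := by
        simp_rw [hscale, integral_const_mul, mul_inv_cancel_left₀ hy.ne']

lemma integral_halfPlanePoissonKernel_sub {y : ℝ} (hy : 0 < y) (t : ℝ) :
    ∫ x, halfPlanePoissonKernel y (t - x) = π := by
  simpa [integral_univ_inv_one_add_sq] using integral_mul_halfPlanePoissonKernel_sub 1 hy t

lemma abs_integral_mul_halfPlanePoissonKernel_sub_le {φ : ℝ → ℝ} {B : ℝ} (hB : ∀ x, |φ x| ≤ B)
    {y : ℝ} (hy : 0 < y) (t : ℝ) : |∫ x, φ x * halfPlanePoissonKernel y (t - x)| ≤ B * π := by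
  have hP x := halfPlanePoissonKernel_nonneg hy.le (t - x)
  have hP_int : Integrable fun x => halfPlanePoissonKernel y (t - x) :=
    .of_integral_ne_zero (by rw [integral_halfPlanePoissonKernel_sub hy t]; exact pi_ne_zero)
  rw [← integral_halfPlanePoissonKernel_sub hy t, ← integral_const_mul, ← Real.norm_eq_abs]
  refine norm_integral_le_of_norm_le (hP_int.const_mul B) (Eventually.of_forall fun x => ?_)
  rw [norm_mul, Real.norm_of_nonneg (hP x)]
  exact mul_le_mul_of_nonneg_right (hB x) (hP x)

lemma tendsto_integral_mul_halfPlanePoissonKernel_sub {φ : ℝ → ℝ} (hφ : Continuous φ) {B : ℝ}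
    (hB : ∀ x, |φ x| ≤ B) (t : ℝ) :
    Tendsto (fun y => ∫ x, φ x * halfPlanePoissonKernel y (t - x)) (𝓝[>] 0) (𝓝 (π * φ t)) := by
  have hinv : Continuous fun σ : ℝ => (1 + σ ^ 2)⁻¹ :=
    (continuous_const.add (continuous_pow 2)).inv₀ fun σ =>
      (by positivity : (0 : ℝ) < 1 + σ ^ 2).ne'
  have hcont : Continuous fun y => ∫ σ, φ (t - y * σ) * (1 + σ ^ 2)⁻¹ := by
    refine continuous_of_dominated (bound := fun σ => B * (1 + σ ^ 2)⁻¹)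
      (fun y => (by fun_prop : Continuous _).aestronglyMeasurable) (fun y => ?_)
      (integrable_inv_one_add_sq.const_mul B) (Eventually.of_forall fun σ => by fun_prop)
    refine Eventually.of_forall fun σ => ?_
    rw [norm_mul, Real.norm_eq_abs, norm_inv, Real.norm_of_nonneg (by positivity)]
    exact mul_le_mul_of_nonneg_right (hB _) (by positivity)
  have hlim := hcont.continuousWithinAt (s := Ioi 0) (x := 0)
  simp only [ContinuousWithinAt, zero_mul, sub_zero, integral_const_mul,
    integral_univ_inv_one_add_sq] at hlim
  rw [mul_comm]
  exact hlim.congr' (eventually_nhdsWithin_of_forall fun y hy =>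
    (integral_mul_halfPlanePoissonKernel_sub φ hy t).symm)

lemma halfPlanePoissonKernel_sub_le {R x y t : ℝ} (hR : 1 ≤ R) (hx : |x| ≤ R) (ht : 2 * R ≤ |t|)
    (hy : 0 ≤ y) : halfPlanePoissonKernel y (t - x) ≤ 8 * y / (1 + t ^ 2) := by
  have htx : |t| / 2 ≤ |t - x| := by linarith [abs_sub_abs_le_abs_sub t x]
  have htx2 : t ^ 2 ≤ 4 * (t - x) ^ 2 := by
    nlinarith [sq_abs t, sq_abs (t - x), abs_nonneg t]
  have ht2 : 4 ≤ t ^ 2 := by nlinarith [sq_abs t, abs_nonneg t]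
  rcases hy.eq_or_lt with rfl | hy
  · simp [halfPlanePoissonKernel]
  rw [halfPlanePoissonKernel, div_le_div_iff₀ (by positivity) (by positivity)]
  nlinarith [sq_nonneg y]

lemma HasCompactSupport.exists_one_le_abs_le_of_ne_zero {φ : ℝ → ℝ} (hcs : HasCompactSupport φ) :
    ∃ R, 1 ≤ R ∧ ∀ x, φ x ≠ 0 → |x| ≤ R := by
  obtain ⟨R, -, hR⟩ := hcs.exists_pos_le_norm
  exact ⟨max R 1, le_max_right _ _, fun x hx =>
    (not_le.1 (mt (hR x) hx)).le.trans (le_max_left _ _)⟩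

lemma exists_abs_integral_mul_halfPlanePoissonKernel_sub_le_div {φ : ℝ → ℝ} (hφ : Continuous φ)
    (hcs : HasCompactSupport φ) :
    ∃ M, ∀ y ∈ Ioc (0 : ℝ) 1, ∀ t,
      |∫ x, φ x * halfPlanePoissonKernel y (t - x)| ≤ M / (1 + t ^ 2) := by
  obtain ⟨R, hR, hsupp⟩ := hcs.exists_one_le_abs_le_of_ne_zero
  obtain ⟨B, hB⟩ := hcs.exists_bound_of_continuous hφ
  have hB0 : 0 ≤ B := (norm_nonneg _).trans (hB 0)
  have hφ1 : 0 ≤ ∫ x, |φ x| := integral_nonneg fun x => abs_nonneg _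
  refine ⟨π * B * (1 + 4 * R ^ 2) + 8 * ∫ x, |φ x|, ?_⟩
  rintro y ⟨hy0, hy1⟩ t
  rw [le_div_iff₀ (by positivity)]
  rcases le_or_gt |t| (2 * R) with ht | ht
  · have hnear := abs_integral_mul_halfPlanePoissonKernel_sub_le hB hy0 t
    have ht2 : 1 + t ^ 2 ≤ 1 + 4 * R ^ 2 := by nlinarith [sq_abs t, abs_nonneg t]
    nlinarith [pi_pos, abs_nonneg (∫ x, φ x * halfPlanePoissonKernel y (t - x))]
  · have hfar : |∫ x, φ x * halfPlanePoissonKernel y (t - x)| ≤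
        (∫ x, |φ x|) * (8 * y / (1 + t ^ 2)) := by
      rw [← integral_mul_const, ← Real.norm_eq_abs]
      refine norm_integral_le_of_norm_le
        ((hφ.integrable_of_hasCompactSupport hcs).abs.mul_const _)
        (Eventually.of_forall fun x => ?_)
      rw [norm_mul, Real.norm_eq_abs, Real.norm_of_nonneg (halfPlanePoissonKernel_nonneg hy0.le _)]
      by_cases hx : φ x = 0
      · simp [hx]
      exact mul_le_mul_of_nonneg_left
        (halfPlanePoissonKernel_sub_le hR (hsupp x hx) ht.le hy0.le) (abs_nonneg _)
    rw [mul_div_assoc', le_div_iff₀ (by positivity)] at hfar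
    have : 0 ≤ π * B * (1 + 4 * R ^ 2) := by positivity
    nlinarith

lemma integral_mul_integral_mul_halfPlanePoissonKernel_sub (hmeas : Measurable η)
    (hint : Integrable (fun t => |η t| / (1 + t ^ 2))) {φ : ℝ → ℝ} (hφ : Continuous φ)
    (hcs : HasCompactSupport φ) {y : ℝ} (hy : y ≠ 0) :
    ∫ t, η t * ∫ x, φ x * halfPlanePoissonKernel y (t - x) =
      ∫ x, φ x * halfPlanePoissonIntegral η x y := by
  obtain ⟨R, -, hsupp⟩ := hcs.exists_one_le_abs_le_of_ne_zero
  set K := |y| * ((1 + 2 * R ^ 2) / y ^ 2 + 2)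
  have hprod : Integrable
      (Function.uncurry fun x t => φ x * (η t * halfPlanePoissonKernel y (t - x)))
      (volume.prod volume) := by
    refine ((hφ.integrable_of_hasCompactSupport hcs).norm.mul_prod (hint.const_mul K)).mono'
      (by unfold halfPlanePoissonKernel; fun_prop) (Eventually.of_forall fun ⟨x, t⟩ => ?_)
    by_cases hx : φ x = 0
    · simp [hx]
    calc ‖φ x * (η t * halfPlanePoissonKernel y (t - x))‖
        = ‖φ x‖ * (|η t| * |halfPlanePoissonKernel y (t - x)|) := by
          simp only [norm_mul, Real.norm_eq_abs]
      _ ≤ ‖φ x‖ * (|η t| * (K / (1 + t ^ 2))) := by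
          gcongr
          exact abs_halfPlanePoissonKernel_sub_le (hsupp x hx) hy t
      _ = ‖φ x‖ * (K * (|η t| / (1 + t ^ 2))) := by ring
  calc ∫ t, η t * ∫ x, φ x * halfPlanePoissonKernel y (t - x)
      = ∫ t, ∫ x, φ x * (η t * halfPlanePoissonKernel y (t - x)) := by
        simp_rw [← integral_const_mul, mul_left_comm (η _)]
    _ = ∫ x, ∫ t, φ x * (η t * halfPlanePoissonKernel y (t - x)) :=
        (integral_integral_swap hprod).symm
    _ = ∫ x, φ x * halfPlanePoissonIntegral η x y := by
        simp_rw [integral_const_mul, halfPlanePoissonIntegral]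

lemma tendsto_integral_mul_halfPlanePoissonIntegral (hmeas : Measurable η)
    (hint : Integrable (fun t => |η t| / (1 + t ^ 2))) {φ : ℝ → ℝ} (hφ : Continuous φ)
    (hcs : HasCompactSupport φ) :
    Tendsto (fun y => ∫ x, φ x * halfPlanePoissonIntegral η x y) (𝓝[>] 0)
      (𝓝 (π * ∫ t, η t * φ t)) := by
  obtain ⟨M, hM⟩ := exists_abs_integral_mul_halfPlanePoissonKernel_sub_le_div hφ hcs
  obtain ⟨B, hB⟩ := hcs.exists_bound_of_continuous hφ
  have hsmooth_meas y : StronglyMeasurable fun t => ∫ x, φ x * halfPlanePoissonKernel y (t - x) :=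
    StronglyMeasurable.integral_prod_right'
      (f := fun p : ℝ × ℝ => φ p.2 * halfPlanePoissonKernel y (p.1 - p.2))
      (by unfold halfPlanePoissonKernel; fun_prop : Measurable _).stronglyMeasurable
  have hlim : Tendsto (fun y => ∫ t, η t * ∫ x, φ x * halfPlanePoissonKernel y (t - x)) (𝓝[>] 0)
      (𝓝 (∫ t, η t * (π * φ t))) := by
    refine tendsto_integral_filter_of_dominated_convergence (fun t => M * (|η t| / (1 + t ^ 2)))
      (Eventually.of_forall fun y =>
        hmeas.aestronglyMeasurable.mul (hsmooth_meas y).aestronglyMeasurable)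
      ?_ (hint.const_mul M) (ae_of_all _ fun t =>
        (tendsto_integral_mul_halfPlanePoissonKernel_sub hφ hB t).const_mul (η t))
    filter_upwards [Ioc_mem_nhdsGT one_pos] with y hy
    refine ae_of_all _ fun t => ?_
    calc ‖η t * ∫ x, φ x * halfPlanePoissonKernel y (t - x)‖
        ≤ |η t| * (M / (1 + t ^ 2)) := by
          rw [norm_mul, Real.norm_eq_abs, Real.norm_eq_abs]
          exact mul_le_mul_of_nonneg_left (hM y hy t) (abs_nonneg _)
      _ = M * (|η t| / (1 + t ^ 2)) := by ring
  simp_rw [mul_left_comm (η _), integral_const_mul] at hlim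
  exact hlim.congr' (eventually_nhdsWithin_of_forall fun y hy =>
    integral_mul_integral_mul_halfPlanePoissonKernel_sub hmeas hint hφ hcs hy.ne')

lemma locallyIntegrable_of_integrable_abs_div_one_add_sq (hmeas : Measurable η)
    (hint : Integrable (fun t => |η t| / (1 + t ^ 2))) : LocallyIntegrable η := by
  have hdiv : Integrable fun t => η t / (1 + t ^ 2) := by
    refine hint.mono' (by fun_prop : Measurable fun t => η t / (1 + t ^ 2)).aestronglyMeasurable
      (ae_of_all _ fun t => ?_)
    rw [Real.norm_eq_abs, abs_div, abs_of_pos (by positivity : (0 : ℝ) < 1 + t ^ 2)]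
  have heq : η = fun t => (1 + t ^ 2) * (η t / (1 + t ^ 2)) := by
    funext t
    field_simp
  rw [heq]
  exact hdiv.locallyIntegrable.continuous_mul (by fun_prop)

end

/-- If `η : ℝ → ℝ` is measurable with `∫ |η(t)|/(1+t²) dt < ∞` and
`∫ η(t)/(t-z)² dt = 0` for every non-real `z`, then `η` is a.e. equal to a constant. -/
theorem statement_0 (η : ℝ → ℝ) (hmeas : Measurable η)
    (hint : Integrable (fun t : ℝ => |η t| / (1 + t ^ 2)))
    (hvanish : ∀ z : ℂ, z.im ≠ 0 → (∫ t : ℝ, (η t : ℂ) / (((t : ℂ) - z) ^ 2)) = 0) :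
    ∃ c : ℝ, ∀ᵐ t : ℝ ∂volume, η t = c := by
  have hlim {φ : ℝ → ℝ} (hφ : Continuous φ) (hcs : HasCompactSupport φ) :
      Tendsto (fun y => (∫ x, φ x) * halfPlanePoissonIntegral η 0 y) (𝓝[>] 0)
        (𝓝 (π * ∫ t, η t * φ t)) := by
    refine (tendsto_integral_mul_halfPlanePoissonIntegral hmeas hint hφ hcs).congr'
      (eventually_nhdsWithin_of_forall fun y hy => ?_)
    simp_rw [halfPlanePoissonIntegral_eq_of_integral_div_sub_sq_eq_zero hmeas hint hvanish
      hy.ne', integral_mul_const]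
  let φ₀ : ContDiffBump (0 : ℝ) := ⟨1, 2, one_pos, one_lt_two⟩
  have hbump := hlim (φ₀.continuous_normed (μ := volume)) φ₀.hasCompactSupport_normed
  simp only [φ₀.integral_normed, one_mul] at hbump
  refine ⟨∫ t, η t * φ₀.normed volume t, ae_eq_of_integral_contDiff_smul_eq
    (locallyIntegrable_of_integrable_abs_div_one_add_sq hmeas hint) (locallyIntegrable_const _)
    fun g hg hgs => ?_⟩
  have hpair := tendsto_nhds_unique (hlim hg.continuous hgs) (hbump.const_mul (∫ x, g x))
  simp_rw [smul_eq_mul, integral_mul_const, mul_comm (g _)]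
  rw [mul_left_comm] at hpair
  exact mul_left_cancel₀ pi_ne_zero hpair
end

section
/- Let H and H' be densely defined closed operators on a Hilbert space with a common point ζ in their resolvent sets such that (H'−ζ)⁻¹ − (H−ζ)⁻¹ is trace class. Suppose ξ and ξ' are real-valued functions in L¹(ℝ, dt/(1+t²)) such that for all non-real z, tr((H'−z)⁻¹ − (H−z)⁻¹) = −(1/π)∫_ℝ ξ(t)/(t−z)² dt and the same identity holds with ξ' in place of ξ. Then ξ − ξ' is a.e. equal to a real constant. -/
noncomputable section
open scoped InnerProductSpace ComplexConjugate
open MeasureTheory Filter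

namespace PD

variable (H : Type*) [NormedAddCommGroup H] [InnerProductSpace ℂ H] [CompleteSpace H]

/-- The index set of a fixed Hilbert basis of `H`. -/
def hbIdx : Set H := (exists_hilbertBasis ℂ H).choose

/-- A fixed Hilbert basis of `H`. -/
def hb : HilbertBasis (hbIdx H) ℂ H := (exists_hilbertBasis ℂ H).choose_spec.choose

variable {H}

/-- Hilbert--Schmidt operator. -/
def IsHS (T : H →L[ℂ] H) : Prop := Summable fun i : hbIdx H => ‖T (hb H i)‖ ^ 2

/-- Trace class operator: a product of two Hilbert--Schmidt operators. -/
def IsTraceClass (T : H →L[ℂ] H) : Prop :=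
  ∃ A B : H →L[ℂ] H, IsHS A ∧ IsHS B ∧ T = A.comp B

/-- The trace, computed in the fixed Hilbert basis. -/
def trace (T : H →L[ℂ] H) : ℂ := ∑' i : hbIdx H, ⟪(hb H i : H), T (hb H i)⟫_ℂ

/-- The Fredholm determinant `det(I + T)` as the limit of finite-section determinants. -/
def fredholmDet (T : H →L[ℂ] H) : ℂ := by
  classical
  exact limUnder Filter.atTop fun s : Finset (hbIdx H) =>
    Matrix.det (Matrix.of fun i j : s =>
      (if i = j then (1 : ℂ) else 0) + ⟪(hb H (i : hbIdx H) : H), T (hb H (j : hbIdx H))⟫_ℂ)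

/-- The trace norm, as the supremum over finite orthonormal systems. -/
def traceNorm (T : H →L[ℂ] H) : ℝ :=
  ⨆ q : Σ n : ℕ, {p : (Fin n → H) × (Fin n → H) // Orthonormal ℂ p.1 ∧ Orthonormal ℂ p.2},
    ∑ k, ‖⟪q.2.1.1 k, T (q.2.1.2 k)⟫_ℂ‖

/-- `R` is the resolvent of the (possibly unbounded) operator `T` at `z`,
i.e. `R = (T - z)⁻¹` as a bounded everywhere-defined operator. -/
structure IsResolventAt (T : H →ₗ.[ℂ] H) (z : ℂ) (R : H →L[ℂ] H) : Prop where
  mem : ∀ x, R x ∈ T.domain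
  right : ∀ x, T ⟨R x, mem x⟩ - z • R x = x
  left : ∀ x : T.domain, R (T x - z • (x : H)) = (x : H)

/-- Accumulative operator: `Im (T f, f) ≤ 0` on the domain. -/
def IsAccumulative (T : H →ₗ.[ℂ] H) : Prop :=
  ∀ f : T.domain, (⟪(f : H), T f⟫_ℂ).im ≤ 0

/-- Maximal accumulative operator: accumulative and every point of the open upper
half-plane belongs to the resolvent set. -/
def IsMaxAccumulative (T : H →ₗ.[ℂ] H) : Prop :=
  IsAccumulative T ∧ ∀ z : ℂ, 0 < z.im → ∃ R : H →L[ℂ] H, IsResolventAt T z R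

/-- Densely defined operator. -/
def IsDenselyDefined (T : H →ₗ.[ℂ] H) : Prop := Dense (T.domain : Set H)

/-- Symmetric operator. -/
def IsSymmetricP (T : H →ₗ.[ℂ] H) : Prop :=
  ∀ x y : T.domain, ⟪(x : H), T y⟫_ℂ = ⟪T x, (y : H)⟫_ℂ

/-- The imaginary part `(T - T*)/(2i)` of a bounded operator. -/
def imP {𝓗 : Type*} [NormedAddCommGroup 𝓗] [InnerProductSpace ℂ 𝓗] [CompleteSpace 𝓗]
    (T : 𝓗 →L[ℂ] 𝓗) : 𝓗 →L[ℂ] 𝓗 :=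
  ((2 * Complex.I)⁻¹ : ℂ) • (T - ContinuousLinearMap.adjoint T)

/-!
Put `g = ξ - ξ'`, so that `∫ g t / (t - z)² dt = 0` off the real axis. This integral is the
`z`-derivative of `F z = ∫ g t ((t - z)⁻¹ - (t - w)⁻¹) dt`, so `F` is constant on each half-plane.
For `z = x + iy` with `y > 0`, `(t - z)⁻¹ - (t - z̄)⁻¹` is `2i` times the Poisson kernel
`y / ((t - x)² + y²)`, and passing from `z` to `z̄` through `i` and `-i` shows that the Poisson
integral of `g` at every point of the upper half-plane equals `∫ g t / (1 + t²) dt`. Testing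
against a compactly supported `φ` and letting `y → 0` (dominated convergence works because
`(1 + t²)` times the Poisson smoothing of `φ` stays bounded) gives
`π ∫ φ g = (∫ φ) ∫ g / (1 + t²)` for all such `φ`, hence `g` is a.e. constant.
-/

open Topology Real

variable {g : ℝ → ℂ} {φ : ℝ → ℝ}

section CauchyTransform

lemma one_add_sq_le_mul_sub_sq_add_sq {r s a b : ℝ} (ha : |r| ≤ a) (hb : b ≤ |s|) (hb0 : 0 < b)
    (t : ℝ) : 1 + t ^ 2 ≤ max 2 ((1 + 2 * a ^ 2) / b ^ 2) * ((t - r) ^ 2 + s ^ 2) := by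
  set K := max 2 ((1 + 2 * a ^ 2) / b ^ 2)
  have hK2 : 2 ≤ K := le_max_left _ _
  have hKb : 1 + 2 * a ^ 2 ≤ K * b ^ 2 :=
    (div_le_iff₀ (by positivity)).mp (le_max_right _ _)
  have hr : r ^ 2 ≤ a ^ 2 := sq_le_sq' (abs_le.mp ha).1 (abs_le.mp ha).2
  have hs : b ^ 2 ≤ s ^ 2 := by
    simpa [sq_abs] using pow_le_pow_left₀ hb0.le hb 2
  nlinarith [sq_nonneg (t - 2 * r), sq_nonneg (t - r)]

lemma ofReal_sub_ne_zero {z : ℂ} (hz : z.im ≠ 0) (t : ℝ) : (t : ℂ) - z ≠ 0 := by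
  intro h
  apply hz
  simpa using congrArg Complex.im h

lemma norm_ofReal_sub_sq (t : ℝ) (z : ℂ) : ‖(t : ℂ) - z‖ ^ 2 = (t - z.re) ^ 2 + z.im ^ 2 := by
  rw [Complex.sq_norm, Complex.normSq_apply]
  simp only [Complex.sub_re, Complex.ofReal_re, Complex.sub_im, Complex.ofReal_im]
  ring

lemma norm_one_add_ofReal_sq (t : ℝ) : ‖1 + (t : ℂ) ^ 2‖ = 1 + t ^ 2 := by
  rw [show 1 + (t : ℂ) ^ 2 = ((1 + t ^ 2 : ℝ) : ℂ) by push_cast; ring, Complex.norm_real,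
    Real.norm_of_nonneg (by positivity)]

lemma one_add_ofReal_sq_ne_zero (t : ℝ) : 1 + (t : ℂ) ^ 2 ≠ 0 := by
  rw [← norm_ne_zero_iff, norm_one_add_ofReal_sq]
  positivity

lemma one_add_sq_mul_norm_inv_sq_le {x : ℂ} {a b : ℝ} (ha : |x.re| ≤ a) (hb : b ≤ |x.im|)
    (hb0 : 0 < b) (t : ℝ) :
    (1 + t ^ 2) * ‖((t : ℂ) - x)⁻¹‖ ^ 2 ≤ max 2 ((1 + 2 * a ^ 2) / b ^ 2) := by
  have hx : x.im ≠ 0 := abs_pos.mp (hb0.trans_le hb)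
  have hpos : 0 < ‖(t : ℂ) - x‖ ^ 2 := by
    have := ofReal_sub_ne_zero hx t
    positivity
  rw [norm_inv, inv_pow, ← div_eq_mul_inv, div_le_iff₀ hpos, norm_ofReal_sub_sq]
  exact one_add_sq_le_mul_sub_sq_add_sq ha hb hb0 t

lemma integrable_mul_of_one_add_sq_mul_norm_le {g K : ℝ → ℂ}
    (hg : Integrable (fun t : ℝ => g t / (1 + t ^ 2))) (hK : AEStronglyMeasurable K)
    {C : ℝ} (hC : ∀ t, (1 + t ^ 2) * ‖K t‖ ≤ C) : Integrable (fun t => g t * K t) := by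
  refine (hg.mul_bdd (g := fun t : ℝ => (1 + (t : ℂ) ^ 2) * K t) (c := C) ?_
    (ae_of_all _ fun t => ?_)).congr (ae_of_all _ fun t => ?_)
  · exact (by fun_prop : Continuous fun t : ℝ => 1 + (t : ℂ) ^ 2).aestronglyMeasurable.mul hK
  · simpa only [norm_mul, norm_one_add_ofReal_sq] using hC t
  · have := one_add_ofReal_sq_ne_zero t
    simp only
    field_simp

lemma locallyIntegrable_of_integrable_div_one_add_sq
    (hg : Integrable (fun t : ℝ => g t / (1 + t ^ 2))) : LocallyIntegrable g := by
  rw [locallyIntegrable_iff]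
  intro K hK
  have hw : Continuous fun t : ℝ => 1 + (t : ℂ) ^ 2 := by fun_prop
  refine (hg.integrableOn.continuousOn_mul hw.continuousOn hK).congr_fun (fun t _ => ?_)
    hK.measurableSet
  have := one_add_ofReal_sq_ne_zero t
  field_simp

lemma integrable_div_ofReal_sub_sq (hg : Integrable (fun t : ℝ => g t / (1 + t ^ 2)))
    {z : ℂ} (hz : z.im ≠ 0) : Integrable (fun t : ℝ => g t / ((t : ℂ) - z) ^ 2) := by
  simp only [div_eq_mul_inv, ← inv_pow]
  refine integrable_mul_of_one_add_sq_mul_norm_le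
    (C := max 2 ((1 + 2 * |z.re| ^ 2) / |z.im| ^ 2)) hg (by fun_prop) fun t => ?_
  rw [norm_pow]
  exact one_add_sq_mul_norm_inv_sq_le le_rfl le_rfl (abs_pos.mpr hz) t

lemma inv_sub_inv_eq_mul {z w : ℂ} (hz : z.im ≠ 0) (hw : w.im ≠ 0) (t : ℝ) :
    ((t : ℂ) - z)⁻¹ - ((t : ℂ) - w)⁻¹ = (z - w) * (((t : ℂ) - z)⁻¹ * ((t : ℂ) - w)⁻¹) := by
  have := ofReal_sub_ne_zero hz t
  have := ofReal_sub_ne_zero hw t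
  field_simp
  ring

lemma integrable_mul_inv_sub_sub (hg : Integrable (fun t : ℝ => g t / (1 + t ^ 2)))
    {z w : ℂ} (hz : z.im ≠ 0) (hw : w.im ≠ 0) :
    Integrable (fun t : ℝ => g t * (((t : ℂ) - z)⁻¹ - ((t : ℂ) - w)⁻¹)) := by
  refine integrable_mul_of_one_add_sq_mul_norm_le
    (C := ‖z - w‖ * (max 2 ((1 + 2 * |z.re| ^ 2) / |z.im| ^ 2)
      + max 2 ((1 + 2 * |w.re| ^ 2) / |w.im| ^ 2))) hg (by fun_prop) fun t => ?_
  have hz' := one_add_sq_mul_norm_inv_sq_le le_rfl le_rfl (abs_pos.mpr hz) t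
  have hw' := one_add_sq_mul_norm_inv_sq_le le_rfl le_rfl (abs_pos.mpr hw) t
  rw [inv_sub_inv_eq_mul hz hw, norm_mul, norm_mul, mul_left_comm]
  gcongr
  nlinarith [sq_nonneg (‖((t : ℂ) - z)⁻¹‖ - ‖((t : ℂ) - w)⁻¹‖), sq_nonneg t]

lemma abs_re_le_of_mem_ball {x z : ℂ} {ε : ℝ} (hx : x ∈ Metric.ball z ε) :
    |x.re| ≤ |z.re| + ε := by
  have := (Complex.abs_re_le_norm (x - z)).trans_lt (mem_ball_iff_norm.mp hx)
  rw [Complex.sub_re] at this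
  linarith [abs_sub_abs_le_abs_sub x.re z.re]

lemma abs_im_sub_le_of_mem_ball {x z : ℂ} {ε : ℝ} (hx : x ∈ Metric.ball z ε) :
    |z.im| - ε ≤ |x.im| := by
  have := (Complex.abs_im_le_norm (x - z)).trans_lt (mem_ball_iff_norm.mp hx)
  rw [Complex.sub_im] at this
  linarith [abs_sub_abs_le_abs_sub z.im x.im, abs_sub_comm x.im z.im]

lemma hasDerivAt_integral_mul_inv_sub_sub (hg : Integrable (fun t : ℝ => g t / (1 + t ^ 2)))
    {z w : ℂ} (hz : z.im ≠ 0) (hw : w.im ≠ 0) :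
    HasDerivAt (fun x => ∫ t : ℝ, g t * (((t : ℂ) - x)⁻¹ - ((t : ℂ) - w)⁻¹))
      (∫ t : ℝ, g t / ((t : ℂ) - z) ^ 2) z := by
  obtain ⟨ε, hε2, hε⟩ : ∃ ε, |z.im| = 2 * ε ∧ 0 < ε := ⟨|z.im| / 2, by ring, by positivity⟩
  have hball : ∀ x ∈ Metric.ball z ε, |x.re| ≤ |z.re| + ε ∧ ε ≤ |x.im| := fun x hx =>
    ⟨abs_re_le_of_mem_ball hx, by linarith [abs_im_sub_le_of_mem_ball hx]⟩
  set C := max 2 ((1 + 2 * (|z.re| + ε) ^ 2) / ε ^ 2)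
  have him_ne : ∀ x ∈ Metric.ball z ε, x.im ≠ 0 :=
    fun x hx => abs_pos.mp (hε.trans_le (hball x hx).2)
  refine (hasDerivAt_integral_of_dominated_loc_of_deriv_le (Metric.ball_mem_nhds z hε)
    (F := fun x t => g t * (((t : ℂ) - x)⁻¹ - ((t : ℂ) - w)⁻¹))
    (F' := fun x t => g t / ((t : ℂ) - x) ^ 2) (bound := fun t => C * ‖g t / (1 + t ^ 2)‖) ?_
    (integrable_mul_inv_sub_sub hg hz hw) (integrable_div_ofReal_sub_sq hg hz).aestronglyMeasurable
    (ae_of_all _ fun t x hx => ?_)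
    (hg.norm.const_mul C) (ae_of_all _ fun t x hx => ?_)).2
  · filter_upwards [Metric.ball_mem_nhds z hε] with x hx
    exact (integrable_mul_inv_sub_sub hg (him_ne x hx) hw).aestronglyMeasurable
  · obtain ⟨hre, him⟩ := hball x hx
    have hx := one_add_sq_mul_norm_inv_sq_le hre him hε t
    have h1 : (1 + t ^ 2 : ℝ) ≠ 0 := by positivity
    calc ‖g t / ((t : ℂ) - x) ^ 2‖
        = ‖g t / (1 + t ^ 2)‖ * ((1 + t ^ 2) * ‖((t : ℂ) - x)⁻¹‖ ^ 2) := by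
          rw [norm_div, norm_div, norm_one_add_ofReal_sq, norm_inv, norm_pow]
          field_simp
      _ ≤ ‖g t / (1 + t ^ 2)‖ * C := by gcongr
      _ = C * ‖g t / (1 + t ^ 2)‖ := mul_comm _ _
  · have hinv : HasDerivAt (fun x : ℂ => ((t : ℂ) - x)⁻¹) (((t : ℂ) - x) ^ 2)⁻¹ x := by
      simpa [Pi.inv_def] using
        ((hasDerivAt_id x).const_sub (t : ℂ)).inv (ofReal_sub_ne_zero (him_ne x hx) t)
    simpa only [div_eq_mul_inv] using (hinv.sub_const ((t : ℂ) - w)⁻¹).const_mul (g t)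

lemma integral_mul_inv_sub_sub_eq_zero (hg : Integrable (fun t : ℝ => g t / (1 + t ^ 2)))
    {s : Set ℂ} (hs : IsOpen s) (hs' : IsPreconnected s) (hs0 : ∀ z ∈ s, z.im ≠ 0)
    (h : ∀ z ∈ s, ∫ t : ℝ, g t / ((t : ℂ) - z) ^ 2 = 0) {z w : ℂ} (hz : z ∈ s) (hw : w ∈ s) :
    ∫ t : ℝ, g t * (((t : ℂ) - z)⁻¹ - ((t : ℂ) - w)⁻¹) = 0 := by
  have hderiv : ∀ x ∈ s,
      HasDerivAt (fun x => ∫ t : ℝ, g t * (((t : ℂ) - x)⁻¹ - ((t : ℂ) - w)⁻¹)) 0 x :=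
    fun x hx => h x hx ▸ hasDerivAt_integral_mul_inv_sub_sub hg (hs0 x hx) (hs0 w hw)
  calc _ = ∫ t : ℝ, g t * (((t : ℂ) - w)⁻¹ - ((t : ℂ) - w)⁻¹) :=
        hs.is_const_of_deriv_eq_zero hs'
          (fun x hx => (hderiv x hx).differentiableAt.differentiableWithinAt)
          (fun x hx => (hderiv x hx).deriv) hz hw
    _ = 0 := by simp

lemma inv_sub_inv_conj (x y t : ℝ) (hy : y ≠ 0) :
    ((t : ℂ) - ⟨x, y⟩)⁻¹ - ((t : ℂ) - ⟨x, -y⟩)⁻¹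
      = 2 * Complex.I * ((y / ((t - x) ^ 2 + y ^ 2) : ℝ) : ℂ) := by
  have hprod : ((t : ℂ) - ⟨x, y⟩) * ((t : ℂ) - ⟨x, -y⟩) = (((t - x) ^ 2 + y ^ 2 : ℝ) : ℂ) := by
    apply Complex.ext <;> simp [sq]; ring
  have hdiff : (⟨x, y⟩ : ℂ) - ⟨x, -y⟩ = 2 * Complex.I * y := by
    apply Complex.ext <;> simp; ring
  rw [inv_sub_inv_eq_mul (z := ⟨x, y⟩) hy (by simpa using hy), ← mul_inv, hprod, hdiff]
  push_cast
  ring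

lemma integral_mul_inv_sub_inv_conj (g : ℝ → ℂ) (x : ℝ) {y : ℝ} (hy : y ≠ 0) :
    ∫ t : ℝ, g t * (((t : ℂ) - ⟨x, y⟩)⁻¹ - ((t : ℂ) - ⟨x, -y⟩)⁻¹)
      = 2 * Complex.I * ∫ t : ℝ, (y / ((t - x) ^ 2 + y ^ 2)) • g t := by
  rw [← integral_const_mul]
  congr 1 with t
  rw [inv_sub_inv_conj x y t hy, Complex.real_smul]
  ring

lemma integral_poisson_smul_eq (hg : Integrable (fun t : ℝ => g t / (1 + t ^ 2)))
    (h : ∀ z : ℂ, z.im ≠ 0 → ∫ t : ℝ, g t / ((t : ℂ) - z) ^ 2 = 0) (x : ℝ) {y : ℝ} (hy : 0 < y) :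
    ∫ t : ℝ, (y / ((t - x) ^ 2 + y ^ 2)) • g t = ∫ t : ℝ, g t / (1 + t ^ 2) := by
  have hupper : ∀ {a b : ℂ}, 0 < a.im → 0 < b.im →
      ∫ t : ℝ, g t * (((t : ℂ) - a)⁻¹ - ((t : ℂ) - b)⁻¹) = 0 :=
    integral_mul_inv_sub_sub_eq_zero hg (isOpen_lt continuous_const Complex.continuous_im)
      (convex_halfSpace_im_gt 0).isPreconnected (fun z hz => (ne_of_lt hz).symm)
      (fun z hz => h z (ne_of_lt hz).symm)
  have hlower : ∀ {a b : ℂ}, a.im < 0 → b.im < 0 →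
      ∫ t : ℝ, g t * (((t : ℂ) - a)⁻¹ - ((t : ℂ) - b)⁻¹) = 0 :=
    integral_mul_inv_sub_sub_eq_zero hg (isOpen_lt Complex.continuous_im continuous_const)
      (convex_halfSpace_im_lt 0).isPreconnected (fun z hz => ne_of_lt hz)
      (fun z hz => h z (ne_of_lt hz))
  -- Passing through `i` and `-i` keeps each difference of resolvents within one half-plane.
  have hsplit : ∀ t : ℝ, g t * (((t : ℂ) - ⟨x, y⟩)⁻¹ - ((t : ℂ) - ⟨x, -y⟩)⁻¹)
      = (g t * (((t : ℂ) - ⟨x, y⟩)⁻¹ - ((t : ℂ) - ⟨0, 1⟩)⁻¹)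
        + g t * (((t : ℂ) - ⟨0, 1⟩)⁻¹ - ((t : ℂ) - ⟨0, -1⟩)⁻¹))
        + g t * (((t : ℂ) - ⟨0, -1⟩)⁻¹ - ((t : ℂ) - ⟨x, -y⟩)⁻¹) := fun t => by ring
  have hy' : (⟨x, -y⟩ : ℂ).im < 0 := neg_neg_of_pos hy
  have hint : ∀ {a b : ℂ}, a.im ≠ 0 → b.im ≠ 0 →
      Integrable (fun t : ℝ => g t * (((t : ℂ) - a)⁻¹ - ((t : ℂ) - b)⁻¹)) :=
    integrable_mul_inv_sub_sub hg
  have key := integral_mul_inv_sub_inv_conj g x hy.ne'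
  rw [funext hsplit,
    integral_add (by exact (hint hy.ne' one_ne_zero).add (hint one_ne_zero (by simp)))
      (hint (by simp) hy'.ne),
    integral_add (hint hy.ne' one_ne_zero) (hint one_ne_zero (by simp)), hupper hy one_pos,
    hlower (by simp) hy', integral_mul_inv_sub_inv_conj g 0 one_ne_zero, zero_add, add_zero] at key
  have h2I : 2 * Complex.I ≠ 0 := by simp
  refine (mul_left_cancel₀ h2I key).symm.trans (integral_congr_ae (ae_of_all _ fun t => ?_))
  simp only [Complex.real_smul, sub_zero, one_pow, one_div]
  push_cast
  rw [add_comm, div_eq_inv_mul]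

end CauchyTransform

section CauchySmoothing

/-- `π` times the Poisson integral of `φ` at `t + iy`, written with the substitution `x = t + yu`:
in this form it is jointly continuous in `(y, t)` on all of `ℝ²` and equals `π φ t` at `y = 0`. -/
def cauchySmooth (φ : ℝ → ℝ) (y t : ℝ) : ℝ := ∫ u : ℝ, φ (t + y * u) * (1 + u ^ 2)⁻¹

lemma cauchySmooth_zero (φ : ℝ → ℝ) (t : ℝ) : cauchySmooth φ 0 t = π * φ t := by
  simp [cauchySmooth, integral_const_mul, integral_univ_inv_one_add_sq, mul_comm]

lemma norm_mul_inv_one_add_sq_le {B : ℝ} (hB : ∀ x, ‖φ x‖ ≤ B) (x u : ℝ) :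
    ‖φ x * (1 + u ^ 2)⁻¹‖ ≤ B * (1 + u ^ 2)⁻¹ := by
  rw [norm_mul, Real.norm_of_nonneg (by positivity : 0 ≤ (1 + u ^ 2)⁻¹)]
  exact mul_le_mul_of_nonneg_right (hB x) (by positivity)

lemma continuous_cauchySmooth (hφ : Continuous φ) {B : ℝ} (hB : ∀ x, ‖φ x‖ ≤ B) :
    Continuous fun p : ℝ × ℝ => cauchySmooth φ p.1 p.2 :=
  continuous_of_dominated (fun p => by fun_prop)
    (fun p => ae_of_all _ fun u => norm_mul_inv_one_add_sq_le hB _ u)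
    (integrable_inv_one_add_sq.const_mul B) (ae_of_all _ fun u => by fun_prop)

lemma abs_cauchySmooth_le {B : ℝ} (hB : ∀ x, ‖φ x‖ ≤ B) (y t : ℝ) :
    |cauchySmooth φ y t| ≤ B * π := by
  rw [← Real.norm_eq_abs, ← integral_univ_inv_one_add_sq, ← integral_const_mul]
  exact norm_integral_le_of_norm_le (integrable_inv_one_add_sq.const_mul B)
    (ae_of_all _ fun u => norm_mul_inv_one_add_sq_le hB _ u)

lemma cauchySmooth_eq_integral_poisson (φ : ℝ → ℝ) {y : ℝ} (hy : 0 < y) (t : ℝ) :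
    cauchySmooth φ y t = ∫ x : ℝ, φ x * (y / ((t - x) ^ 2 + y ^ 2)) := by
  set G : ℝ → ℝ := fun x => φ x * (y / ((t - x) ^ 2 + y ^ 2))
  have hsubst : ∀ u : ℝ, φ (t + y * u) * (1 + u ^ 2)⁻¹ = y * G (y * u + t) := by
    intro u
    have : (t - (y * u + t)) ^ 2 + y ^ 2 = y ^ 2 * (1 + u ^ 2) := by ring
    simp only [G]
    rw [this, add_comm (y * u) t]
    field_simp
  rw [cauchySmooth, funext hsubst, integral_const_mul,
    Measure.integral_comp_mul_left (fun x => G (x + t)), integral_add_right_eq_self,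
    smul_eq_mul, abs_of_pos (inv_pos.mpr hy), mul_inv_cancel_left₀ hy.ne']

lemma div_sub_sq_add_sq_le {x t y M : ℝ} (hx : |x| ≤ M) (ht : 2 * M ≤ |t|) (hy : 0 ≤ y)
    (hy1 : y ≤ 1) (ht0 : t ≠ 0) : y / ((t - x) ^ 2 + y ^ 2) ≤ 4 / t ^ 2 := by
  have hdist : |t| / 2 ≤ |t - x| := by linarith [abs_sub_abs_le_abs_sub t x]
  have hsq : t ^ 2 / 4 ≤ (t - x) ^ 2 := by
    have := pow_le_pow_left₀ (by positivity) hdist 2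
    rwa [div_pow, sq_abs, sq_abs, show (2 : ℝ) ^ 2 = 4 by norm_num] at this
  have ht2 : 0 < t ^ 2 := by positivity
  rcases hy.eq_or_lt with rfl | hy0
  · simp only [zero_div]; positivity
  rw [div_le_div_iff₀ (by positivity) ht2]
  nlinarith

lemma one_add_sq_mul_abs_cauchySmooth_le (hφ : Integrable φ) {M B : ℝ} (hM1 : 1 ≤ M)
    (hM : ∀ x, φ x ≠ 0 → |x| ≤ M) (hB : ∀ x, ‖φ x‖ ≤ B) {y : ℝ} (hy : 0 < y) (hy1 : y ≤ 1)
    (t : ℝ) :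
    (1 + t ^ 2) * |cauchySmooth φ y t| ≤ max ((1 + 4 * M ^ 2) * (B * π)) (8 * ∫ x, |φ x|) := by
  rcases le_or_gt |t| (2 * M) with ht | ht
  · refine le_max_of_le_left (mul_le_mul ?_ (abs_cauchySmooth_le hB y t) (abs_nonneg _)
      (by positivity))
    nlinarith [sq_abs t, abs_nonneg t]
  · have ht0 : t ≠ 0 := abs_pos.mp (by linarith)
    have ht1 : 1 ≤ t ^ 2 := by nlinarith [sq_abs t, abs_nonneg t]
    have hS : |cauchySmooth φ y t| ≤ (∫ x, |φ x|) * (4 / t ^ 2) := by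
      rw [cauchySmooth_eq_integral_poisson φ hy, ← Real.norm_eq_abs, ← integral_mul_const]
      refine norm_integral_le_of_norm_le (hφ.abs.mul_const _) (ae_of_all _ fun x => ?_)
      rw [norm_mul, Real.norm_eq_abs, Real.norm_of_nonneg (by positivity)]
      by_cases hx : φ x = 0
      · simp [hx]
      · exact mul_le_mul_of_nonneg_left (div_sub_sq_add_sq_le (hM x hx) ht.le hy.le hy1 ht0)
          (abs_nonneg _)
    have hI : 0 ≤ ∫ x, |φ x| := integral_nonneg fun x => abs_nonneg _
    refine le_max_of_le_right ?_
    calc (1 + t ^ 2) * |cauchySmooth φ y t| ≤ (1 + t ^ 2) * ((∫ x, |φ x|) * (4 / t ^ 2)) := by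
          gcongr
      _ = 4 * (∫ x, |φ x|) * (1 / t ^ 2 + 1) := by field_simp
      _ ≤ 4 * (∫ x, |φ x|) * 2 := by
          gcongr
          linarith [(div_le_one (by positivity)).mpr ht1]
      _ = 8 * ∫ x, |φ x| := by ring

lemma one_add_sq_mul_poisson_le {x M y : ℝ} (hx : |x| ≤ M) (hy : 0 < y) (t : ℝ) :
    (1 + t ^ 2) * (y / ((t - x) ^ 2 + y ^ 2)) ≤ y * max 2 ((1 + 2 * M ^ 2) / y ^ 2) := by
  have := one_add_sq_le_mul_sub_sq_add_sq hx (abs_of_pos hy).ge hy t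
  rw [mul_div_assoc', div_le_iff₀ (by positivity)]
  nlinarith

lemma integral_cauchySmooth_smul (hg : Integrable (fun t : ℝ => g t / (1 + t ^ 2)))
    (hφ : Continuous φ) (hφi : Integrable φ) {M : ℝ} (hM : ∀ x, φ x ≠ 0 → |x| ≤ M) {y : ℝ}
    (hy : 0 < y) :
    ∫ t, cauchySmooth φ y t • g t = ∫ x, φ x • ∫ t, (y / ((t - x) ^ 2 + y ^ 2)) • g t := by
  set K := y * max 2 ((1 + 2 * M ^ 2) / y ^ 2)
  have hint : Integrable (Function.uncurry fun x t => (φ x * (y / ((t - x) ^ 2 + y ^ 2))) • g t)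
      (volume.prod volume) := by
    refine (hφi.norm.mul_prod (hg.norm.const_mul K)).mono' ?_ (ae_of_all _ fun ⟨x, t⟩ => ?_)
    · have hgm := (locallyIntegrable_of_integrable_div_one_add_sq hg).aestronglyMeasurable
      have hP : Continuous fun p : ℝ × ℝ => y / ((p.2 - p.1) ^ 2 + y ^ 2) :=
        continuous_const.div (by fun_prop) fun p => by positivity
      exact ((hφ.comp continuous_fst).mul hP).aestronglyMeasurable.smul hgm.comp_snd
    · by_cases hx : φ x = 0
      · simp only [Function.uncurry_apply_pair, hx, zero_mul, zero_smul, norm_zero]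
        positivity
      have h1 : (1 + t ^ 2 : ℝ) ≠ 0 := by positivity
      calc ‖(φ x * (y / ((t - x) ^ 2 + y ^ 2))) • g t‖
          = ‖φ x‖ * ((1 + t ^ 2) * (y / ((t - x) ^ 2 + y ^ 2)) * ‖g t / (1 + t ^ 2)‖) := by
            rw [norm_smul, norm_mul,
              Real.norm_of_nonneg (by positivity : 0 ≤ y / ((t - x) ^ 2 + y ^ 2)),
              norm_div (g t), norm_one_add_ofReal_sq]
            field_simp
        _ ≤ ‖φ x‖ * (K * ‖g t / (1 + t ^ 2)‖) := by
            gcongr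
            exact one_add_sq_mul_poisson_le (hM x hx) hy t
  simp_rw [cauchySmooth_eq_integral_poisson φ hy, ← integral_smul_const, ← integral_smul,
    smul_smul]
  exact (integral_integral_swap hint).symm

lemma _root_.HasCompactSupport.exists_abs_le_of_ne_zero (hφs : HasCompactSupport φ) :
    ∃ M, 1 ≤ M ∧ ∀ x, φ x ≠ 0 → |x| ≤ M := by
  obtain ⟨M, hM⟩ := hφs.isBounded.subset_closedBall 0
  refine ⟨max M 1, le_max_right _ _, fun x hx => le_max_of_le_left ?_⟩
  simpa using hM (subset_tsupport φ hx)

lemma tendsto_integral_cauchySmooth_smul (hg : Integrable (fun t : ℝ => g t / (1 + t ^ 2)))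
    (hφ : Continuous φ) (hφs : HasCompactSupport φ) :
    Tendsto (fun y => ∫ t, cauchySmooth φ y t • g t) (𝓝[>] 0) (𝓝 (π • ∫ t, φ t • g t)) := by
  obtain ⟨M, hM1, hM⟩ := hφs.exists_abs_le_of_ne_zero
  obtain ⟨B, hB⟩ := hφs.exists_bound_of_continuous hφ
  have hφi : Integrable φ := hφ.integrable_of_hasCompactSupport hφs
  have hS := continuous_cauchySmooth hφ hB
  set C := max ((1 + 4 * M ^ 2) * (B * π)) (8 * ∫ x, |φ x|)
  simp_rw [← integral_smul, smul_smul, ← cauchySmooth_zero]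
  refine tendsto_integral_filter_of_dominated_convergence (fun t => C * ‖g t / (1 + t ^ 2)‖)
    (Eventually.of_forall fun y => ?_) ?_ (hg.norm.const_mul C) (ae_of_all _ fun t => ?_)
  · exact (hS.comp (continuous_const.prodMk continuous_id)).aestronglyMeasurable.smul
      (locallyIntegrable_of_integrable_div_one_add_sq hg).aestronglyMeasurable
  · filter_upwards [Ioc_mem_nhdsGT one_pos] with y hy
    refine ae_of_all _ fun t => ?_
    have h1 : (1 + t ^ 2 : ℝ) ≠ 0 := by positivity
    calc ‖cauchySmooth φ y t • g t‖
        = (1 + t ^ 2) * |cauchySmooth φ y t| * ‖g t / (1 + t ^ 2)‖ := by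
          rw [norm_smul, Real.norm_eq_abs, norm_div, norm_one_add_ofReal_sq]
          field_simp
      _ ≤ C * ‖g t / (1 + t ^ 2)‖ := by
          gcongr
          exact one_add_sq_mul_abs_cauchySmooth_le hφi hM1 hM hB hy.1 hy.2 t
  · exact ((hS.comp (continuous_id.prodMk continuous_const)).tendsto 0).mono_left
      nhdsWithin_le_nhds |>.smul_const (g t)

lemma integral_smul_eq_of_integral_poisson_smul_eq
    (hg : Integrable (fun t : ℝ => g t / (1 + t ^ 2))) {A : ℂ}
    (hP : ∀ (x : ℝ) {y : ℝ}, 0 < y → ∫ t : ℝ, (y / ((t - x) ^ 2 + y ^ 2)) • g t = A)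
    (hφ : Continuous φ) (hφs : HasCompactSupport φ) :
    π • ∫ t, φ t • g t = (∫ x, φ x) • A := by
  obtain ⟨M, -, hM⟩ := hφs.exists_abs_le_of_ne_zero
  have hconst : ∀ᶠ y in 𝓝[>] 0, ∫ t, cauchySmooth φ y t • g t = (∫ x, φ x) • A := by
    filter_upwards [self_mem_nhdsWithin] with y hy
    simp_rw [integral_cauchySmooth_smul hg hφ (hφ.integrable_of_hasCompactSupport hφs) hM hy,
      hP _ hy, integral_smul_const]
  exact tendsto_nhds_unique
    ((tendsto_integral_cauchySmooth_smul hg hφ hφs).congr' hconst) tendsto_const_nhds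

end CauchySmoothing

theorem ae_eq_const_of_integral_div_sub_sq_eq_zero
    (hg : Integrable (fun t : ℝ => g t / (1 + t ^ 2)))
    (h : ∀ z : ℂ, z.im ≠ 0 → ∫ t : ℝ, g t / ((t : ℂ) - z) ^ 2 = 0) :
    ∀ᵐ t, g t = π⁻¹ • ∫ s : ℝ, g s / (1 + s ^ 2) := by
  set c := π⁻¹ • ∫ s : ℝ, g s / (1 + s ^ 2)
  have hloc := locallyIntegrable_of_integrable_div_one_add_sq hg
  have h0 : ∀ᵐ t, (g - fun _ : ℝ => c) t = 0 := by
    refine ae_eq_zero_of_integral_contDiff_smul_eq_zero (hloc.sub (locallyIntegrable_const c))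
      fun φ hφ hφs => ?_
    have key := integral_smul_eq_of_integral_poisson_smul_eq hg (integral_poisson_smul_eq hg h)
      hφ.continuous hφs
    simp_rw [Pi.sub_apply, smul_sub]
    rw [integral_sub (hloc.integrable_smul_left_of_hasCompactSupport hφ.continuous hφs)
      ((hφ.continuous.integrable_of_hasCompactSupport hφs).smul_const c), integral_smul_const,
      sub_eq_zero, smul_comm, ← key, inv_smul_smul₀ pi_ne_zero]
  filter_upwards [h0] with t ht using sub_eq_zero.mp ht

lemma integrable_ofReal_div_one_add_sq {f : ℝ → ℝ}
    (hf : Integrable fun t : ℝ => f t / (1 + t ^ 2)) :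
    Integrable fun t : ℝ => (f t : ℂ) / (1 + t ^ 2) := by
  simpa using hf.ofReal (𝕜 := ℂ)

theorem statement_1_general {H : Type*} [NormedAddCommGroup H] [InnerProductSpace ℂ H]
    [CompleteSpace H]
    (R R' : ℂ → H →L[ℂ] H)
    (ξ ξ' : ℝ → ℝ)
    (hξint : Integrable (fun t : ℝ => ξ t / (1 + t ^ 2)))
    (hξ'int : Integrable (fun t : ℝ => ξ' t / (1 + t ^ 2)))
    (htrace : ∀ z : ℂ, z.im ≠ 0 →
      trace (R' z - R z)
        = -(1 / (Real.pi : ℂ)) * ∫ t : ℝ, (ξ t : ℂ) / (((t : ℂ) - z) ^ 2))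
    (htrace' : ∀ z : ℂ, z.im ≠ 0 →
      trace (R' z - R z)
        = -(1 / (Real.pi : ℂ)) * ∫ t : ℝ, (ξ' t : ℂ) / (((t : ℂ) - z) ^ 2)) :
    ∃ c : ℝ, ∀ᵐ t : ℝ ∂volume, ξ t - ξ' t = c := by
  have hξ := integrable_ofReal_div_one_add_sq hξint
  have hξ' := integrable_ofReal_div_one_add_sq hξ'int
  have hg : Integrable fun t : ℝ => ((ξ t : ℂ) - ξ' t) / (1 + t ^ 2) :=
    (hξ.sub hξ').congr (ae_of_all _ fun t => (sub_div _ _ _).symm)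
  have hcauchy : ∀ z : ℂ, z.im ≠ 0 → ∫ t : ℝ, ((ξ t : ℂ) - ξ' t) / ((t : ℂ) - z) ^ 2 = 0 := by
    intro z hz
    have hπ : -(1 / (Real.pi : ℂ)) ≠ 0 := by simp [Real.pi_ne_zero]
    simp only [sub_div]
    rw [integral_sub (integrable_div_ofReal_sub_sq hξ hz) (integrable_div_ofReal_sub_sq hξ' hz),
      mul_left_cancel₀ hπ ((htrace z hz).symm.trans (htrace' z hz)), sub_self]
  refine ⟨(Real.pi⁻¹ • ∫ s : ℝ, ((ξ s : ℂ) - ξ' s) / (1 + s ^ 2)).re, ?_⟩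
  filter_upwards [ae_eq_const_of_integral_div_sub_sq_eq_zero hg hcauchy] with t ht
  simpa using congrArg Complex.re ht

/-- If two densely defined closed operators have trace class resolvent
difference and a real-valued function `ξ` (resp. `ξ'`) in `L¹(ℝ, dt/(1+t²))` satisfies the
trace formula for the pair, then `ξ - ξ'` is a.e. equal to a real constant. -/
theorem statement_1 {H : Type*} [NormedAddCommGroup H] [InnerProductSpace ℂ H]
    [CompleteSpace H]
    (T T' : H →ₗ.[ℂ] H)
    (hTd : IsDenselyDefined T) (hT'd : IsDenselyDefined T')
    (hTc : T.IsClosed) (hT'c : T'.IsClosed)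
    (R R' : ℂ → H →L[ℂ] H)
    (hR : ∀ z : ℂ, z.im ≠ 0 → IsResolventAt T z (R z))
    (hR' : ∀ z : ℂ, z.im ≠ 0 → IsResolventAt T' z (R' z))
    (ζ : ℂ) (hζ : ζ.im ≠ 0) (htc : IsTraceClass (R' ζ - R ζ))
    (ξ ξ' : ℝ → ℝ)
    (hξint : Integrable (fun t : ℝ => ξ t / (1 + t ^ 2)))
    (hξ'int : Integrable (fun t : ℝ => ξ' t / (1 + t ^ 2)))
    (htrace : ∀ z : ℂ, z.im ≠ 0 →
      trace (R' z - R z)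
        = -(1 / (Real.pi : ℂ)) * ∫ t : ℝ, (ξ t : ℂ) / (((t : ℂ) - z) ^ 2))
    (htrace' : ∀ z : ℂ, z.im ≠ 0 →
      trace (R' z - R z)
        = -(1 / (Real.pi : ℂ)) * ∫ t : ℝ, (ξ' t : ℂ) / (((t : ℂ) - z) ^ 2)) :
    ∃ c : ℝ, ∀ᵐ t : ℝ ∂volume, ξ t - ξ' t = c :=
  statement_1_general R R' ξ ξ' hξint hξ'int htrace htrace'

end PD
end
end

section
/- Let H and H' be maximal accumulative operators on a separable Hilbert space 𝔥 and V a trace class operator on 𝔥 such that iy ∈ ρ(H) ∩ ρ(H') for all sufficiently large y > 0. Then lim_{y→∞} y² · tr((H'−iy)⁻¹ V (H−iy)⁻¹) = −tr(V). -/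
noncomputable section
open scoped InnerProductSpace ComplexConjugate
open MeasureTheory Filter

namespace PD

variable (H : Type*) [NormedAddCommGroup H] [InnerProductSpace ℂ H] [CompleteSpace H]

variable {H}

/-!
Write `V = A B` with `A`, `B` Hilbert–Schmidt. Since `tr (X Y) = tr (Y X)` for Hilbert–Schmidt
`X`, `Y`, we get `y² tr ((H' - iy)⁻¹ V (H - iy)⁻¹) = tr (B Z(y) A)` with
`Z(y) = y (H - iy)⁻¹ · y (H' - iy)⁻¹`. Accumulativity gives `‖y (H - iy)⁻¹‖ ≤ 1`, and on the domain
`y (H - iy)⁻¹ f = i f - i (H - iy)⁻¹ H f → i f`; the domain is dense, so `Z(y) → i · i = -1`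
strongly while `‖Z(y)‖ ≤ 1`. Dominated convergence in the basis expansion of the trace, with
dominating sequence `(‖B* eⱼ‖² + ‖A eⱼ‖²) / 2`, gives `tr (B Z(y) A) → -tr (B A) = -tr V`.
-/

open scoped Topology

section HilbertSchmidt

variable {H : Type*} [NormedAddCommGroup H] [InnerProductSpace ℂ H] [CompleteSpace H]

lemma hasSum_norm_inner_hb_sq (u : H) :
    HasSum (fun i : hbIdx H => ‖⟪(hb H i : H), u⟫_ℂ‖ ^ 2) (‖u‖ ^ 2) := by
  simpa only [ENNReal.toReal_ofNat, Real.rpow_two, HilbertBasis.repr_apply_apply,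
    LinearIsometryEquiv.norm_map] using lp.hasSum_norm (p := 2) (by norm_num) ((hb H).repr u)

lemma isHS_iff_summable_norm_inner_sq (X : H →L[ℂ] H) :
    IsHS X ↔ Summable fun p : hbIdx H × hbIdx H => ‖⟪(hb H p.2 : H), X (hb H p.1)⟫_ℂ‖ ^ 2 := by
  rw [summable_prod_of_nonneg (fun p => by positivity)]
  simp only [(hasSum_norm_inner_hb_sq _).tsum_eq, IsHS]
  exact ⟨fun h => ⟨fun i => (hasSum_norm_inner_hb_sq _).summable, h⟩, And.right⟩

lemma IsHS.adjoint {X : H →L[ℂ] H} (hX : IsHS X) : IsHS (ContinuousLinearMap.adjoint X) := by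
  rw [isHS_iff_summable_norm_inner_sq] at hX ⊢
  refine ((Equiv.prodComm _ _).summable_iff.2 hX).congr fun p => ?_
  rw [Function.comp_apply, Equiv.prodComm_apply, Prod.fst_swap, Prod.snd_swap,
    ContinuousLinearMap.adjoint_inner_right, ← inner_conj_symm, RCLike.norm_conj]

lemma IsHS.clm_comp (S : H →L[ℂ] H) {X : H →L[ℂ] H} (hX : IsHS X) : IsHS (S.comp X) := by
  refine Summable.of_nonneg_of_le (fun i => by positivity) (fun i => ?_) (hX.mul_left (‖S‖ ^ 2))
  rw [ContinuousLinearMap.comp_apply, ← mul_pow]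
  gcongr
  exact S.le_opNorm _

lemma IsHS.comp_clm {X : H →L[ℂ] H} (hX : IsHS X) (S : H →L[ℂ] H) : IsHS (X.comp S) := by
  simpa only [ContinuousLinearMap.adjoint_comp, ContinuousLinearMap.adjoint_adjoint] using
    (hX.adjoint.clm_comp (ContinuousLinearMap.adjoint S)).adjoint

lemma summable_inner_mul_inner_of_isHS {X Y : H →L[ℂ] H} (hX : IsHS X) (hY : IsHS Y) :
    Summable fun p : hbIdx H × hbIdx H =>
      ⟪(hb H p.1 : H), X (hb H p.2)⟫_ℂ * ⟪(hb H p.2 : H), Y (hb H p.1)⟫_ℂ := by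
  rw [isHS_iff_summable_norm_inner_sq] at hX hY
  refine Summable.of_norm_bounded
    ((((Equiv.prodComm _ _).summable_iff.2 hX).add hY).div_const 2) fun p => ?_
  rw [Function.comp_apply, Equiv.prodComm_apply, Prod.fst_swap, Prod.snd_swap, norm_mul,
    le_div_iff₀ two_pos]
  linarith [two_mul_le_add_sq ‖⟪(hb H p.1 : H), X (hb H p.2)⟫_ℂ‖
    ‖⟪(hb H p.2 : H), Y (hb H p.1)⟫_ℂ‖]

lemma trace_comp_eq_tsum_prod {X Y : H →L[ℂ] H} (hX : IsHS X) (hY : IsHS Y) :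
    trace (X.comp Y) = ∑' p : hbIdx H × hbIdx H,
      ⟪(hb H p.1 : H), X (hb H p.2)⟫_ℂ * ⟪(hb H p.2 : H), Y (hb H p.1)⟫_ℂ := by
  have hrow : ∀ i : hbIdx H, HasSum
      (fun j => ⟪(hb H i : H), X (hb H j)⟫_ℂ * ⟪(hb H j : H), Y (hb H i)⟫_ℂ)
      ⟪(hb H i : H), X (Y (hb H i))⟫_ℂ := fun i => by
    simpa only [ContinuousLinearMap.adjoint_inner_left] using
      (hb H).hasSum_inner_mul_inner (ContinuousLinearMap.adjoint X (hb H i)) (Y (hb H i))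
  rw [(summable_inner_mul_inner_of_isHS hX hY).tsum_prod' fun i => (hrow i).summable]
  exact tsum_congr fun i => (hrow i).tsum_eq.symm

lemma trace_comp_comm {X Y : H →L[ℂ] H} (hX : IsHS X) (hY : IsHS Y) :
    trace (X.comp Y) = trace (Y.comp X) := by
  rw [trace_comp_eq_tsum_prod hX hY, trace_comp_eq_tsum_prod hY hX,
    ← (Equiv.prodComm _ _).tsum_eq]
  exact tsum_congr fun p => mul_comm _ _

lemma trace_smul (c : ℂ) (X : H →L[ℂ] H) : trace (c • X) = c * trace X := by
  simp only [trace, smul_apply, inner_smul_right, tsum_mul_left]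

lemma trace_neg (X : H →L[ℂ] H) : trace (-X) = -trace X := by
  simp only [trace, neg_apply, inner_neg_right, tsum_neg]

lemma sq_mul_trace_comp_comp {A B : H →L[ℂ] H} (hA : IsHS A) (hB : IsHS B) (c : ℂ)
    (P Q : H →L[ℂ] H) :
    c ^ 2 * trace (Q.comp ((A.comp B).comp P)) = trace (B.comp (((c • P).comp (c • Q)).comp A)) :=
  calc c ^ 2 * trace (Q.comp ((A.comp B).comp P))
      = trace (((c • Q).comp A).comp (B.comp (c • P))) := by
        rw [← trace_smul]
        congr 1
        ext x
        simp only [pow_two, smul_apply, ContinuousLinearMap.comp_apply,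
          ContinuousLinearMap.smul_comp, ContinuousLinearMap.comp_smulₛₗ, RingHom.id_apply,
          smul_smul]
    _ = trace (B.comp (((c • P).comp (c • Q)).comp A)) := by
        rw [trace_comp_comm (hA.clm_comp _) (hB.comp_clm _)]
        rfl

lemma tendsto_trace_comp_comp {α : Type*} {l : Filter α} {A B : H →L[ℂ] H} (hA : IsHS A)
    (hB : IsHS B) {Z : α → H →L[ℂ] H} {Z₀ : H →L[ℂ] H} {C : ℝ} (hZ : ∀ᶠ a in l, ‖Z a‖ ≤ C)
    (hlim : ∀ x, Tendsto (fun a => Z a x) l (𝓝 (Z₀ x))) :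
    Tendsto (fun a => trace (B.comp ((Z a).comp A))) l (𝓝 (trace (B.comp (Z₀.comp A)))) := by
  refine tendsto_tsum_of_dominated_convergence
    (((hB.adjoint.add hA).div_const 2).mul_left C) (fun i => ?_) ?_
  · exact tendsto_const_nhds.inner ((B.continuous.tendsto _).comp (hlim _))
  · filter_upwards [hZ] with a ha i
    set b := ‖ContinuousLinearMap.adjoint B (hb H i)‖
    set v := ‖A (hb H i)‖
    have hC : 0 ≤ C := (norm_nonneg _).trans ha
    calc ‖⟪(hb H i : H), B (Z a (A (hb H i)))⟫_ℂ‖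
        = ‖⟪ContinuousLinearMap.adjoint B (hb H i), Z a (A (hb H i))⟫_ℂ‖ := by
          rw [ContinuousLinearMap.adjoint_inner_left]
      _ ≤ b * (C * v) :=
          (norm_inner_le_norm _ _).trans (by gcongr; exact (Z a).le_of_opNorm_le ha _)
      _ ≤ C * ((b ^ 2 + v ^ 2) / 2) := by nlinarith [two_mul_le_add_sq b v]

end HilbertSchmidt

section StrongConvergence

variable {α E F G : Type*} [NormedAddCommGroup E] [NormedAddCommGroup F] [NormedAddCommGroup G]
  [NormedSpace ℂ E] [NormedSpace ℂ F] [NormedSpace ℂ G] {l : Filter α}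

lemma tendsto_apply_of_dense {S : α → E →L[ℂ] F} {S₀ : E →L[ℂ] F} {C : ℝ}
    (hS : ∀ᶠ a in l, ‖S a‖ ≤ C) {s : Set E} (hs : Dense s)
    (hlim : ∀ x ∈ s, Tendsto (fun a => S a x) l (𝓝 (S₀ x))) (x : E) :
    Tendsto (fun a => S a x) l (𝓝 (S₀ x)) := by
  rw [Metric.tendsto_nhds]
  intro ε hε
  set K := max C 0 + ‖S₀‖ + 1
  have hK : 0 < K := by positivity
  obtain ⟨x', hxx', hx's⟩ := Metric.dense_iff.1 hs x (ε / (2 * K)) (by positivity)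
  rw [Metric.mem_ball, dist_comm, dist_eq_norm] at hxx'
  filter_upwards [hS, Metric.tendsto_nhds.1 (hlim x' hx's) (ε / 2) (half_pos hε)] with a ha ha'
  rw [dist_eq_norm] at ha' ⊢
  have hsplit : S a x - S₀ x = S a (x - x') - S₀ (x - x') + (S a x' - S₀ x') := by
    simp only [map_sub]; abel
  have hSa : ‖S a (x - x')‖ ≤ max C 0 * ‖x - x'‖ :=
    (S a).le_of_opNorm_le (ha.trans (le_max_left _ _)) _
  have hS₀ : ‖S₀ (x - x')‖ ≤ ‖S₀‖ * ‖x - x'‖ := S₀.le_opNorm _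
  have hKx : K * ‖x - x'‖ < ε / 2 := by
    calc K * ‖x - x'‖ < K * (ε / (2 * K)) := by gcongr
      _ = ε / 2 := by field_simp
  calc ‖S a x - S₀ x‖ ≤ ‖S a (x - x')‖ + ‖S₀ (x - x')‖ + ‖S a x' - S₀ x'‖ := by
        rw [hsplit]; exact (norm_add_le _ _).trans (by gcongr; exact norm_sub_le _ _)
    _ < ε := by nlinarith [norm_nonneg (x - x')]

lemma tendsto_comp_apply {S : α → E →L[ℂ] F} {S' : α → F →L[ℂ] G} {C : ℝ}
    (hS' : ∀ᶠ a in l, ‖S' a‖ ≤ C) {x : E} {u : F} {w : G}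
    (hSx : Tendsto (fun a => S a x) l (𝓝 u)) (hS'u : Tendsto (fun a => S' a u) l (𝓝 w)) :
    Tendsto (fun a => S' a (S a x)) l (𝓝 w) := by
  have hsmall : Tendsto (fun a => S' a (S a x - u)) l (𝓝 0) := by
    refine squeeze_zero_norm' ?_
      (by simpa using (tendsto_sub_nhds_zero_iff.2 hSx).norm.const_mul C)
    filter_upwards [hS'] with a ha
    exact (S' a).le_of_opNorm_le ha _
  simpa [map_sub] using hsmall.add hS'u

end StrongConvergence

section Resolvent

variable {H : Type*} [NormedAddCommGroup H] [InnerProductSpace ℂ H] {T : H →ₗ.[ℂ] H}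

lemma IsResolventAt.mul_norm_sq_le_neg_im_inner (hT : IsAccumulative T) {y : ℝ}
    {R : H →L[ℂ] H} (h : IsResolventAt T (Complex.I * y) R) (x : H) :
    y * ‖R x‖ ^ 2 ≤ -(⟪R x, x⟫_ℂ).im := by
  have hacc : (⟪R x, T ⟨R x, h.mem x⟩⟫_ℂ).im ≤ 0 := hT ⟨R x, h.mem x⟩
  have hx := congrArg (inner ℂ (R x)) (h.right x)
  rw [inner_sub_right, inner_smul_right, inner_self_eq_norm_sq_to_K, ← RCLike.ofReal_pow] at hx
  rw [← hx]
  simp only [Complex.coe_algebraMap, Complex.sub_im, Complex.mul_im, Complex.mul_re,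
    Complex.I_re, Complex.ofReal_re, Complex.I_im, Complex.ofReal_im]
  linarith

lemma IsResolventAt.mul_norm_apply_le (hT : IsAccumulative T) {y : ℝ} {R : H →L[ℂ] H}
    (h : IsResolventAt T (Complex.I * y) R) (x : H) : y * ‖R x‖ ≤ ‖x‖ := by
  have hinner : y * ‖R x‖ ^ 2 ≤ ‖R x‖ * ‖x‖ :=
    (h.mul_norm_sq_le_neg_im_inner hT x).trans <| (neg_le_abs _).trans <|
      (Complex.abs_im_le_norm _).trans (norm_inner_le_norm _ _)
  rcases (norm_nonneg (R x)).eq_or_lt with h0 | hpos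
  · rw [← h0, mul_zero]; exact norm_nonneg x
  · exact le_of_mul_le_mul_right (by linarith) hpos

lemma IsResolventAt.norm_smul_le_one (hT : IsAccumulative T) {y : ℝ} (hy : 0 ≤ y)
    {R : H →L[ℂ] H} (h : IsResolventAt T (Complex.I * y) R) : ‖(y : ℂ) • R‖ ≤ 1 :=
  ContinuousLinearMap.opNorm_le_bound _ zero_le_one fun x => by
    rw [smul_apply, norm_smul, Complex.norm_real, Real.norm_of_nonneg hy, one_mul]
    exact h.mul_norm_apply_le hT x

lemma IsMaxAccumulative.dense_domain [CompleteSpace H] (hT : IsMaxAccumulative T) :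
    Dense (T.domain : Set H) := by
  obtain ⟨R, hR⟩ := hT.2 (Complex.I * (1 : ℝ)) (by simp)
  rw [Submodule.dense_iff_topologicalClosure_eq_top, Submodule.topologicalClosure_eq_top_iff,
    Submodule.eq_bot_iff]
  intro u hu
  have hRu : R u = 0 := by
    have h0 : ⟪R u, u⟫_ℂ = 0 := (Submodule.mem_orthogonal _ u).1 hu _ (hR.mem u)
    have := hR.mul_norm_sq_le_neg_im_inner hT.1 u
    rw [h0, Complex.zero_im, neg_zero, one_mul] at this
    exact norm_eq_zero.1 (pow_eq_zero_iff two_ne_zero |>.1 (le_antisymm this (by positivity)))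
  have hf : (⟨R u, hR.mem u⟩ : T.domain) = 0 := Subtype.ext hRu
  rw [← hR.right u, hf, hRu, LinearPMap.map_zero, smul_zero, sub_zero]

variable {R : ℝ → H →L[ℂ] H} {y₀ : ℝ}

lemma eventually_norm_smul_resolvent_le_one (hT : IsAccumulative T)
    (hR : ∀ y : ℝ, y₀ ≤ y → IsResolventAt T (Complex.I * y) (R y)) :
    ∀ᶠ y : ℝ in atTop, ‖(y : ℂ) • R y‖ ≤ 1 := by
  filter_upwards [eventually_ge_atTop (max y₀ 0)] with y hy
  exact (hR y (le_of_max_le_left hy)).norm_smul_le_one hT (le_of_max_le_right hy)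

lemma tendsto_resolvent_apply_zero (hT : IsAccumulative T)
    (hR : ∀ y : ℝ, y₀ ≤ y → IsResolventAt T (Complex.I * y) (R y)) (x : H) :
    Tendsto (fun y : ℝ => R y x) atTop (𝓝 0) := by
  refine squeeze_zero_norm' ?_ ((tendsto_const_nhds (x := ‖x‖)).div_atTop tendsto_id)
  filter_upwards [eventually_ge_atTop (max y₀ 1)] with y hy
  have hy1 : 0 < y := lt_of_lt_of_le one_pos (le_of_max_le_right hy)
  rw [id, le_div_iff₀ hy1, mul_comm]
  exact (hR y (le_of_max_le_left hy)).mul_norm_apply_le hT x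

lemma tendsto_smul_resolvent_apply (hT : IsAccumulative T) (hd : Dense (T.domain : Set H))
    (hR : ∀ y : ℝ, y₀ ≤ y → IsResolventAt T (Complex.I * y) (R y)) (x : H) :
    Tendsto (fun y : ℝ => ((y : ℂ) • R y) x) atTop (𝓝 (Complex.I • x)) := by
  refine tendsto_apply_of_dense (S := fun y : ℝ => (y : ℂ) • R y)
    (S₀ := Complex.I • ContinuousLinearMap.id ℂ H) (eventually_norm_smul_resolvent_le_one hT hR)
    hd (fun f hf => ?_) x
  have hlim := ((tendsto_resolvent_apply_zero hT hR (T ⟨f, hf⟩)).const_smul Complex.I).const_sub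
    (Complex.I • f)
  rw [smul_zero, sub_zero] at hlim
  refine hlim.congr' ?_
  filter_upwards [eventually_ge_atTop y₀] with y hy
  have hid := (hR y hy).left ⟨f, hf⟩
  rw [map_sub, map_smul] at hid
  show _ = (y : ℂ) • R y f
  have hy' : (y : ℂ) = -Complex.I * (Complex.I * y) := by
    rw [← mul_assoc, neg_mul, Complex.I_mul_I, neg_neg, one_mul]
  rw [hy', ← smul_smul]
  linear_combination (norm := module) (-Complex.I) • hid

end Resolvent

theorem statement_2_general {H : Type*} [NormedAddCommGroup H] [InnerProductSpace ℂ H]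
    [CompleteSpace H]
    (T T' : H →ₗ.[ℂ] H) (hT : IsMaxAccumulative T) (hT' : IsMaxAccumulative T')
    (V : H →L[ℂ] H) (hV : IsTraceClass V)
    (R R' : ℝ → H →L[ℂ] H) (y₀ : ℝ)
    (hR : ∀ y : ℝ, y₀ ≤ y → IsResolventAt T (Complex.I * y) (R y))
    (hR' : ∀ y : ℝ, y₀ ≤ y → IsResolventAt T' (Complex.I * y) (R' y)) :
    Tendsto (fun y : ℝ => (y : ℂ) ^ 2 * trace ((R' y).comp (V.comp (R y))))
      atTop (nhds (-(trace V))) := by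
  obtain ⟨A, B, hA, hB, rfl⟩ := hV
  set Z : ℝ → H →L[ℂ] H := fun y => ((y : ℂ) • R y).comp ((y : ℂ) • R' y)
  have hZ_norm : ∀ᶠ y : ℝ in atTop, ‖Z y‖ ≤ 1 := by
    filter_upwards [eventually_norm_smul_resolvent_le_one hT.1 hR,
      eventually_norm_smul_resolvent_le_one hT'.1 hR'] with y h h'
    exact (ContinuousLinearMap.opNorm_comp_le _ _).trans (mul_le_one₀ h (norm_nonneg _) h')
  have hZ_lim (x : H) : Tendsto (fun y => Z y x) atTop (𝓝 ((-ContinuousLinearMap.id ℂ H) x)) := by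
    simpa [Z, smul_smul] using tendsto_comp_apply (eventually_norm_smul_resolvent_le_one hT.1 hR)
      (tendsto_smul_resolvent_apply hT'.1 hT'.dense_domain hR' x)
      (tendsto_smul_resolvent_apply hT.1 hT.dense_domain hR (Complex.I • x))
  have hlim := tendsto_trace_comp_comp hA hB hZ_norm hZ_lim
  simp only [ContinuousLinearMap.neg_comp, ContinuousLinearMap.id_comp,
    ContinuousLinearMap.comp_neg, trace_neg, trace_comp_comm hB hA] at hlim
  simpa only [sq_mul_trace_comp_comp hA hB] using hlim

/-- For maximal accumulative `H`, `H'` on a separable Hilbert space and a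
trace class `V`, `lim_{y→∞} y² tr((H'-iy)⁻¹ V (H-iy)⁻¹) = -tr V`. -/
theorem statement_2 {H : Type*} [NormedAddCommGroup H] [InnerProductSpace ℂ H]
    [CompleteSpace H] [TopologicalSpace.SeparableSpace H]
    (T T' : H →ₗ.[ℂ] H) (hT : IsMaxAccumulative T) (hT' : IsMaxAccumulative T')
    (V : H →L[ℂ] H) (hV : IsTraceClass V)
    (R R' : ℝ → H →L[ℂ] H) (y₀ : ℝ)
    (hR : ∀ y : ℝ, y₀ ≤ y → IsResolventAt T (Complex.I * y) (R y))
    (hR' : ∀ y : ℝ, y₀ ≤ y → IsResolventAt T' (Complex.I * y) (R' y)) :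
    Tendsto (fun y : ℝ => (y : ℂ) ^ 2 * trace ((R' y).comp (V.comp (R y))))
      atTop (nhds (-(trace V))) :=
  statement_2_general T T' hT hT' V hV R R' y₀ hR hR'

end PD
end
end

section
/- Let A be a densely defined closed symmetric operator on a Hilbert space 𝔥 with boundary triplet Π = {ℋ, Γ₀, Γ₁} for A*, let M be the associated Weyl function and γ the γ-field, and let A_B := A*↾ker(Γ₁ − BΓ₀) for a closed operator B on ℋ. Assume z ∈ ρ(A₀) ∩ ρ(A_B) where A₀ := A*↾ker(Γ₀). If B' is another closed operator with dom(B') = dom(B), A_{B'} defined analogously, and z ∈ ρ(A_{B'}), then (A_{B'} − z)⁻¹ − (A_B − z)⁻¹ = γ(z)(B' − M(z))⁻¹(B − B')(B − M(z))⁻¹ γ(z̄)*. -/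
noncomputable section
open scoped InnerProductSpace ComplexConjugate
open MeasureTheory Filter

namespace PD

variable (H : Type*) [NormedAddCommGroup H] [InnerProductSpace ℂ H] [CompleteSpace H]

variable {H}

variable {𝓗 : Type*} [NormedAddCommGroup 𝓗] [InnerProductSpace ℂ 𝓗] [CompleteSpace 𝓗]

/-- A boundary triplet for the operator `S` (to be thought of as `A*`). -/
structure BoundaryTriplet (S : H →ₗ.[ℂ] H) (𝓗 : Type*) [NormedAddCommGroup 𝓗]
    [InnerProductSpace ℂ 𝓗] where
  Γ₀ : S.domain →ₗ[ℂ] 𝓗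
  Γ₁ : S.domain →ₗ[ℂ] 𝓗
  green : ∀ f g : S.domain, ⟪S f, (g : H)⟫_ℂ - ⟪(f : H), S g⟫_ℂ
      = ⟪Γ₁ f, Γ₀ g⟫_ℂ - ⟪Γ₀ f, Γ₁ g⟫_ℂ
  surj : ∀ h k : 𝓗, ∃ f : S.domain, Γ₀ f = h ∧ Γ₁ f = k

/-- `γ` is the value of the γ-field of the boundary triplet `bt` at the point `z`:
it is a topological isomorphism from `𝓗` onto `ker (S - z)` inverting `Γ₀`. -/
def IsGammaFieldAt (S : H →ₗ.[ℂ] H) (bt : BoundaryTriplet S 𝓗) (z : ℂ)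
    (γ : 𝓗 →L[ℂ] H) : Prop :=
  (∀ h : 𝓗, ∃ hd : γ h ∈ S.domain, S ⟨γ h, hd⟩ = z • γ h ∧ bt.Γ₀ ⟨γ h, hd⟩ = h) ∧
  ∀ f : S.domain, S f = z • (f : H) → γ (bt.Γ₀ f) = (f : H)

/-- `M` is the value of the Weyl function at `z`: `M z = Γ₁ ∘ γ z`. -/
def IsWeylAt (S : H →ₗ.[ℂ] H) (bt : BoundaryTriplet S 𝓗) (γ : 𝓗 →L[ℂ] H)
    (M : 𝓗 →L[ℂ] 𝓗) : Prop :=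
  ∀ (h : 𝓗) (hd : γ h ∈ S.domain), M h = bt.Γ₁ ⟨γ h, hd⟩

/-- `AB` is the restriction `A_B = S ↾ ker (Γ₁ - B Γ₀)` of `S`. -/
def IsRestrictionTo (S : H →ₗ.[ℂ] H) (bt : BoundaryTriplet S 𝓗) (Bop : 𝓗 →ₗ.[ℂ] 𝓗)
    (AB : H →ₗ.[ℂ] H) : Prop :=
  AB ≤ S ∧ ∀ f : S.domain,
    ((f : H) ∈ AB.domain ↔ ∃ hb : bt.Γ₀ f ∈ Bop.domain, bt.Γ₁ f = Bop ⟨bt.Γ₀ f, hb⟩)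

/-- `E` is the bounded inverse of `B - Mz` (with `B` a possibly unbounded operator). -/
def IsInverseOf (Bop : 𝓗 →ₗ.[ℂ] 𝓗) (Mz : 𝓗 →L[ℂ] 𝓗) (E : 𝓗 →L[ℂ] 𝓗) : Prop :=
  (∀ h : 𝓗, ∃ hd : E h ∈ Bop.domain, Bop ⟨E h, hd⟩ - Mz (E h) = h) ∧
  ∀ f : Bop.domain, E (Bop f - Mz (f : 𝓗)) = (f : 𝓗)

/-! Both resolvents are expressed by Krein's formula
`(A_B - z)⁻¹ = (A₀ - z)⁻¹ + γ(z)(B - M(z))⁻¹γ(z̄)*`: for `e := γ(z̄)* x` and `u := (B - M(z))⁻¹ e`,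
the vector `f := (A₀ - z)⁻¹ x + γ(z) u` satisfies `(A* - z) f = x`, `Γ₀ f = u` and
`Γ₁ f = e + M(z) u = B u`, so `f ∈ dom A_B`. Subtracting the two formulas, the difference
`(B' - M(z))⁻¹ - (B - M(z))⁻¹` is rewritten by the second resolvent identity. -/

theorem IsResolventAt.sub_smul_of_le {X : Type*} [NormedAddCommGroup X]
    [InnerProductSpace ℂ X] {T S : X →ₗ.[ℂ] X} {z : ℂ} {R : X →L[ℂ] X}
    (hR : IsResolventAt T z R) (hTS : T ≤ S) (x : X) :
    S ⟨R x, hTS.1 (hR.mem x)⟩ - z • R x = x := by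
  rw [← hTS.2 (x := ⟨R x, hR.mem x⟩) rfl]
  exact hR.right x

theorem IsResolventAt.eq_of_le {X : Type*} [NormedAddCommGroup X] [InnerProductSpace ℂ X]
    {T S : X →ₗ.[ℂ] X} {z : ℂ} {R : X →L[ℂ] X} (hR : IsResolventAt T z R) (hTS : T ≤ S)
    (f : S.domain) (hfT : (f : X) ∈ T.domain) {x : X} (hf : S f - z • (f : X) = x) :
    R x = f := by
  have hTf : T ⟨f, hfT⟩ = S f := hTS.2 rfl
  simpa [hTf, hf] using hR.left ⟨f, hfT⟩

theorem IsInverseOf.apply_sub_apply {K : Type*} [NormedAddCommGroup K] [InnerProductSpace ℂ K]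
    {B B' : K →ₗ.[ℂ] K} {M E E' : K →L[ℂ] K}
    (hE : IsInverseOf B M E) (hE' : IsInverseOf B' M E') (h : K)
    (h1 : E h ∈ B.domain) (h2 : E h ∈ B'.domain) :
    E' (B ⟨E h, h1⟩ - B' ⟨E h, h2⟩) = E' h - E h := by
  obtain ⟨_, hBE⟩ := hE.1 h
  have hE'u : E' (B' ⟨E h, h2⟩ - M (E h)) = E h := hE'.2 ⟨E h, h2⟩
  rw [eq_add_of_sub_eq hBE, add_sub_right_comm, sub_add, map_sub, hE'u]

section Krein

variable {S : H →ₗ.[ℂ] H} {z : ℂ}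

/-- Green's identity against `γ(z̄) h` computes `Γ₁` on `ker Γ₀`. -/
theorem BoundaryTriplet.Γ₁_eq_adjoint_gammaField (bt : BoundaryTriplet S 𝓗) {γ : 𝓗 →L[ℂ] H}
    (hγ : IsGammaFieldAt S bt (conj z) γ) (f : S.domain) (hf : bt.Γ₀ f = 0) :
    bt.Γ₁ f = ContinuousLinearMap.adjoint γ (S f - z • (f : H)) := by
  refine ext_inner_right ℂ fun h => ?_
  obtain ⟨hd, hSg, hΓ₀g⟩ := hγ.1 h
  have hgreen := bt.green f ⟨γ h, hd⟩
  rw [hΓ₀g, hf, inner_zero_left, sub_zero, hSg] at hgreen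
  rw [← hgreen, ContinuousLinearMap.adjoint_inner_left, inner_sub_left, inner_smul_left,
    inner_smul_right]

theorem krein_resolvent_apply (bt : BoundaryTriplet S 𝓗) {B : 𝓗 →ₗ.[ℂ] 𝓗}
    {AB A0 : H →ₗ.[ℂ] H} (hAB : IsRestrictionTo S bt B AB)
    (hA0 : A0 ≤ S ∧ ∀ f : S.domain, ((f : H) ∈ A0.domain ↔ bt.Γ₀ f = 0))
    {R0 RB : H →L[ℂ] H} (hR0 : IsResolventAt A0 z R0) (hRB : IsResolventAt AB z RB)
    {γz γzbar : 𝓗 →L[ℂ] H} (hγz : IsGammaFieldAt S bt z γz)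
    (hγzbar : IsGammaFieldAt S bt (conj z) γzbar)
    {M : 𝓗 →L[ℂ] 𝓗} (hM : IsWeylAt S bt γz M) {E : 𝓗 →L[ℂ] 𝓗} (hE : IsInverseOf B M E)
    (x : H) :
    RB x = R0 x + γz (E (ContinuousLinearMap.adjoint γzbar x)) := by
  set e := ContinuousLinearMap.adjoint γzbar x
  set u := E e
  set f₀ : S.domain := ⟨R0 x, hA0.1.1 (hR0.mem x)⟩
  have hSf₀ : S f₀ - z • (f₀ : H) = x := hR0.sub_smul_of_le hA0.1 x
  have hΓ₀f₀ : bt.Γ₀ f₀ = 0 := (hA0.2 f₀).1 (hR0.mem x)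
  have hΓ₁f₀ : bt.Γ₁ f₀ = e := by
    rw [bt.Γ₁_eq_adjoint_gammaField hγzbar f₀ hΓ₀f₀, hSf₀]
  obtain ⟨hdu, hSg, hΓ₀g⟩ := hγz.1 u
  set g : S.domain := ⟨γz u, hdu⟩
  have hΓ₀f : bt.Γ₀ (f₀ + g) = u := by rw [map_add, hΓ₀f₀, hΓ₀g, zero_add]
  obtain ⟨hBu, hBE⟩ := hE.1 e
  have hfAB : ((f₀ + g : S.domain) : H) ∈ AB.domain := by
    refine (hAB.2 _).2 ⟨hΓ₀f ▸ hBu, ?_⟩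
    have hΓ₁g : bt.Γ₁ g = M u := (hM u hdu).symm
    rw [map_add, hΓ₁f₀, hΓ₁g, ← eq_add_of_sub_eq hBE]
    congr 1
    exact Subtype.ext hΓ₀f.symm
  refine hRB.eq_of_le hAB.1 (f₀ + g) hfAB ?_
  rw [S.map_add, Submodule.coe_add, smul_add, hSg, ← hSf₀]
  abel

end Krein

theorem statement_14_general {H : Type*} [NormedAddCommGroup H] [InnerProductSpace ℂ H]
    [CompleteSpace H] {𝓗 : Type*} [NormedAddCommGroup 𝓗] [InnerProductSpace ℂ 𝓗]
    [CompleteSpace 𝓗]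
    (S : H →ₗ.[ℂ] H)
    (bt : BoundaryTriplet S 𝓗)
    (Bop B'op : 𝓗 →ₗ.[ℂ] 𝓗)
    (hdomBB' : Bop.domain = B'op.domain)
    (AB AB' A0 : H →ₗ.[ℂ] H)
    (hAB : IsRestrictionTo S bt Bop AB) (hAB' : IsRestrictionTo S bt B'op AB')
    (hA0 : A0 ≤ S ∧ ∀ f : S.domain, ((f : H) ∈ A0.domain ↔ bt.Γ₀ f = 0))
    (z : ℂ)
    (R0 : H →L[ℂ] H) (hR0 : IsResolventAt A0 z R0)
    (RB RB' : H →L[ℂ] H) (hRB : IsResolventAt AB z RB) (hRB' : IsResolventAt AB' z RB')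
    (γz γzbar : 𝓗 →L[ℂ] H)
    (hγz : IsGammaFieldAt S bt z γz)
    (hγzbar : IsGammaFieldAt S bt ((starRingEnd ℂ) z) γzbar)
    (Mz : 𝓗 →L[ℂ] 𝓗) (hMz : IsWeylAt S bt γz Mz)
    (E E' : 𝓗 →L[ℂ] 𝓗)
    (hE : IsInverseOf Bop Mz E) (hE' : IsInverseOf B'op Mz E') :
    ∀ x : H,
      ∃ (h1 : E (ContinuousLinearMap.adjoint γzbar x) ∈ Bop.domain)
        (h2 : E (ContinuousLinearMap.adjoint γzbar x) ∈ B'op.domain),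
      RB' x - RB x
        = γz (E' (Bop ⟨E (ContinuousLinearMap.adjoint γzbar x), h1⟩
            - B'op ⟨E (ContinuousLinearMap.adjoint γzbar x), h2⟩)) := by
  intro x
  obtain ⟨h1, -⟩ := hE.1 (ContinuousLinearMap.adjoint γzbar x)
  refine ⟨h1, hdomBB' ▸ h1, ?_⟩
  rw [hE.apply_sub_apply hE' _ h1, map_sub,
    krein_resolvent_apply bt hAB' hA0 hR0 hRB' hγz hγzbar hMz hE' x,
    krein_resolvent_apply bt hAB hA0 hR0 hRB hγz hγzbar hMz hE x]
  abel

/-- Krein-type formula for the resolvent difference of two proper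
extensions `A_{B'}`, `A_B` of a symmetric operator `A` in terms of the γ-field and the
Weyl function of a boundary triplet for `A* = S`:
`(A_{B'} - z)⁻¹ - (A_B - z)⁻¹ = γ(z)(B' - M(z))⁻¹(B - B')(B - M(z))⁻¹ γ(z̄)*`. -/
theorem statement_14 {H : Type*} [NormedAddCommGroup H] [InnerProductSpace ℂ H]
    [CompleteSpace H] {𝓗 : Type*} [NormedAddCommGroup 𝓗] [InnerProductSpace ℂ 𝓗]
    [CompleteSpace 𝓗]
    (A S : H →ₗ.[ℂ] H) (hAd : IsDenselyDefined A) (hAc : A.IsClosed)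
    (hAsym : IsSymmetricP A) (hS : S = A.adjoint)
    (bt : BoundaryTriplet S 𝓗)
    (Bop B'op : 𝓗 →ₗ.[ℂ] 𝓗) (hBc : Bop.IsClosed) (hB'c : B'op.IsClosed)
    (hdomBB' : Bop.domain = B'op.domain)
    (AB AB' A0 : H →ₗ.[ℂ] H)
    (hAB : IsRestrictionTo S bt Bop AB) (hAB' : IsRestrictionTo S bt B'op AB')
    (hA0 : A0 ≤ S ∧ ∀ f : S.domain, ((f : H) ∈ A0.domain ↔ bt.Γ₀ f = 0))
    (z : ℂ)
    (R0 : H →L[ℂ] H) (hR0 : IsResolventAt A0 z R0)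
    (RB RB' : H →L[ℂ] H) (hRB : IsResolventAt AB z RB) (hRB' : IsResolventAt AB' z RB')
    (γz γzbar : 𝓗 →L[ℂ] H)
    (hγz : IsGammaFieldAt S bt z γz)
    (hγzbar : IsGammaFieldAt S bt ((starRingEnd ℂ) z) γzbar)
    (Mz : 𝓗 →L[ℂ] 𝓗) (hMz : IsWeylAt S bt γz Mz)
    (E E' : 𝓗 →L[ℂ] 𝓗)
    (hE : IsInverseOf Bop Mz E) (hE' : IsInverseOf B'op Mz E') :
    ∀ x : H,
      ∃ (h1 : E (ContinuousLinearMap.adjoint γzbar x) ∈ Bop.domain)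
        (h2 : E (ContinuousLinearMap.adjoint γzbar x) ∈ B'op.domain),
      RB' x - RB x
        = γz (E' (Bop ⟨E (ContinuousLinearMap.adjoint γzbar x), h1⟩
            - B'op ⟨E (ContinuousLinearMap.adjoint γzbar x), h2⟩)) :=
  statement_14_general S bt Bop B'op hdomBB' AB AB' A0 hAB hAB' hA0 z R0 hR0 RB RB' hRB hRB' γz
    γzbar hγz hγzbar Mz hMz E E' hE hE'

end PD
end
end

section
/- Let W(z) := I + i√V₊ (B − M(z))⁻¹ √V₊ where B is a bounded operator on a Hilbert space ℋ with Im B ≤ 0, M : ℂ₊ → B(ℋ) satisfies Im M(z) ≥ ε(z) I > 0 for z ∈ ℂ₊, and 0 ≤ V₊ ≤ 2|Im B|. Then I − W(z)*W(z) ≥ 0 for all z ∈ ℂ₊, i.e., W(z) is a contraction on ℂ₊. -/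
/-!
For `x` put `u = (B - M(z))⁻¹ S x`, so that `(B - M(z)) u = S x` and `W(z) x = x + i S u`.
Expanding the square and moving `S` across the inner product,
`‖x‖² - ‖W(z) x‖² = -2 Im ⟪u, (B - M(z)) u⟫ - ‖S u‖² = ⟪u, (2|Im B| - V₊) u⟫ + 2 ⟪u, Im M(z) u⟫`,
and both terms are nonnegative.
-/

noncomputable section
open scoped InnerProductSpace ComplexConjugate
open MeasureTheory Filter

namespace PD

variable (H : Type*) [NormedAddCommGroup H] [InnerProductSpace ℂ H] [CompleteSpace H]

variable {H}

open ContinuousLinearMap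

section

variable {E : Type*} [NormedAddCommGroup E] [InnerProductSpace ℂ E]

lemma _root_.ContinuousLinearMap.IsPositive.of_sub_smul_one {T : E →L[ℂ] E} {ε : ℝ}
    (hT : (T - ε • (1 : E →L[ℂ] E)).IsPositive) (hε : 0 ≤ ε) : T.IsPositive := by
  simpa using hT.add (isPositive_one.smul_of_nonneg (RCLike.ofReal_nonneg.mpr hε))

variable [CompleteSpace E]

lemma _root_.ContinuousLinearMap.isPositive_one_sub_adjoint_comp_self {T : E →L[ℂ] E}
    (hT : ∀ x, ‖T x‖ ≤ ‖x‖) : (1 - adjoint T ∘L T).IsPositive := by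
  refine ⟨((IsSelfAdjoint.one _).sub (IsSelfAdjoint.star_mul_self T)).isSymmetric, fun x => ?_⟩
  rw [reApplyInnerSelf_apply, sub_apply, one_apply_eq_self, inner_sub_left, map_sub,
    ← apply_norm_sq_eq_inner_adjoint_left, inner_self_eq_norm_sq]
  nlinarith [hT x, norm_nonneg (T x)]

lemma imP_sub (T U : E →L[ℂ] E) : imP (T - U) = imP T - imP U := by
  simp only [imP, map_sub, ← smul_sub]
  congr 1
  abel

lemma re_inner_imP_apply_self (T : E →L[ℂ] E) (u : E) :
    (⟪u, imP T u⟫_ℂ).re = (⟪u, T u⟫_ℂ).im := by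
  have hadj : ⟪u, adjoint T u⟫_ℂ = conj ⟪u, T u⟫_ℂ := by
    rw [adjoint_inner_right, inner_conj_symm]
  simp only [imP, smul_apply, sub_apply, inner_smul_right, inner_sub_right, hadj]
  rw [Complex.sub_conj]
  field_simp
  simp

lemma norm_add_I_smul_apply_sq {S : E →L[ℂ] E} (hS : IsSelfAdjoint S) (x u : E) :
    ‖x + Complex.I • S u‖ ^ 2 = ‖x‖ ^ 2 + 2 * (⟪u, S x⟫_ℂ).im + ‖S u‖ ^ 2 := by
  have hsymm : ⟪S u, x⟫_ℂ = ⟪u, S x⟫_ℂ := hS.isSymmetric u x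
  rw [norm_add_sq (𝕜 := ℂ), norm_smul, Complex.norm_I, one_mul, inner_smul_right,
    ← inner_conj_symm, hsymm]
  simp only [RCLike.re_to_complex, Complex.mul_re, Complex.I_re, Complex.I_im,
    Complex.conj_im]
  ring

lemma norm_add_I_smul_apply_le {A S : E →L[ℂ] E} (hS : IsSelfAdjoint S)
    (hA : ((2 : ℝ) • -imP A - S ∘L S).IsPositive) {x u : E} (hAu : A u = S x) :
    ‖x + Complex.I • S u‖ ≤ ‖x‖ := by
  have hform : (⟪u, ((2 : ℝ) • -imP A - S ∘L S) u⟫_ℂ).re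
      = -2 * (⟪u, S x⟫_ℂ).im - ‖S u‖ ^ 2 := by
    have hSS : ⟪u, S (S u)⟫_ℂ = ⟪S u, S u⟫_ℂ := (hS.isSymmetric u (S u)).symm
    rw [← hAu, ← re_inner_imP_apply_self, ← inner_self_eq_norm_sq (𝕜 := ℂ), ← hSS]
    simp only [sub_apply, smul_apply, neg_apply, comp_apply, inner_sub_right,
      ← Complex.coe_smul, inner_smul_right, inner_neg_right, Complex.sub_re, Complex.mul_re,
      Complex.neg_re, Complex.neg_im, Complex.ofReal_re, Complex.ofReal_im, RCLike.re_to_complex]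
    ring
  have hpos := hA.re_inner_nonneg_right u
  rw [RCLike.re_to_complex, hform] at hpos
  refine (sq_le_sq₀ (norm_nonneg _) (norm_nonneg _)).mp ?_
  rw [norm_add_I_smul_apply_sq hS]
  linarith

end

theorem statement_15_general {𝓗 : Type*} [NormedAddCommGroup 𝓗] [InnerProductSpace ℂ 𝓗]
    [CompleteSpace 𝓗]
    (B : 𝓗 →L[ℂ] 𝓗)
    (M : ℂ → 𝓗 →L[ℂ] 𝓗)
    (hM : ∀ z : ℂ, 0 < z.im →
      ∃ ε : ℝ, 0 < ε ∧ (imP (M z) - ε • (1 : 𝓗 →L[ℂ] 𝓗)).IsPositive)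
    (Vp S : 𝓗 →L[ℂ] 𝓗)
    (hVple : ((2 : ℝ) • (-(imP B)) - Vp).IsPositive)
    (hSpos : S.IsPositive) (hSsq : S.comp S = Vp)
    (hinv : ∀ z : ℂ, 0 < z.im → IsUnit (B - M z))
    (W : ℂ → 𝓗 →L[ℂ] 𝓗)
    (hW : ∀ z, W z = 1 + Complex.I • (S.comp ((Ring.inverse (B - M z)).comp S))) :
    ∀ z : ℂ, 0 < z.im →
      (1 - (ContinuousLinearMap.adjoint (W z)).comp (W z)).IsPositive := by
  intro z hz
  obtain ⟨ε, hε, hMε⟩ := hM z hz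
  have hImA : ((2 : ℝ) • -imP (B - M z) - S ∘L S).IsPositive := by
    have hImM : (imP (M z)).IsPositive := hMε.of_sub_smul_one hε.le
    rw [imP_sub, hSsq]
    convert hVple.add (hImM.add hImM) using 1
    module
  refine isPositive_one_sub_adjoint_comp_self fun x => ?_
  have hAu : (B - M z) (Ring.inverse (B - M z) (S x)) = S x :=
    DFunLike.congr_fun (Ring.mul_inverse_cancel _ (hinv z hz)) (S x)
  simpa [hW] using norm_add_I_smul_apply_le hSpos.isSelfAdjoint hImA hAu

/-- With `Im B ≤ 0`, `Im M(z) ≥ ε(z) I > 0` on `ℂ₊` and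
`0 ≤ V₊ ≤ 2|Im B|`, the operator `W(z) = I + i√V₊ (B - M(z))⁻¹ √V₊` satisfies
`I - W(z)*W(z) ≥ 0` on `ℂ₊`, i.e. `W(z)` is a contraction. -/
theorem statement_15 {𝓗 : Type*} [NormedAddCommGroup 𝓗] [InnerProductSpace ℂ 𝓗]
    [CompleteSpace 𝓗]
    (B : 𝓗 →L[ℂ] 𝓗) (hB : (-(imP B)).IsPositive)
    (M : ℂ → 𝓗 →L[ℂ] 𝓗)
    (hM : ∀ z : ℂ, 0 < z.im →
      ∃ ε : ℝ, 0 < ε ∧ (imP (M z) - ε • (1 : 𝓗 →L[ℂ] 𝓗)).IsPositive)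
    (Vp S : 𝓗 →L[ℂ] 𝓗) (hVp : Vp.IsPositive)
    (hVple : ((2 : ℝ) • (-(imP B)) - Vp).IsPositive)
    (hSpos : S.IsPositive) (hSsq : S.comp S = Vp)
    (hinv : ∀ z : ℂ, 0 < z.im → IsUnit (B - M z))
    (W : ℂ → 𝓗 →L[ℂ] 𝓗)
    (hW : ∀ z, W z = 1 + Complex.I • (S.comp ((Ring.inverse (B - M z)).comp S))) :
    ∀ z : ℂ, 0 < z.im →
      (1 - (ContinuousLinearMap.adjoint (W z)).comp (W z)).IsPositive :=
  statement_15_general B M hM Vp S hVple hSpos hSsq hinv W hW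

end PD
end
end
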